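/- arXiv:1904.03029 — 12 statements merged into one kernel-verified Lean document; each statement's English description precedes it below -/
import Mathlib

section
/- Let n be a positive even integer and let q = 3^n. Then the map f : F_q → F_q defined by f(x) = (x - x^2 - x^3)·x^((q-1)/2) - x + x^2 is a bijection of F_q (i.e., the polynomial (x - x^2 - x^3)x^((3^n-1)/2) - x + x^2 is a permutation polynomial of F_{3^n}). -/
theorem stmt_0 {F : Type*} [Field F] [Fintype F] (n : ℕ) (hn : 0 < n) (hn2 : Even n)
    (hcard : Fintype.card F = 3 ^ n) :
    Function.Bijective
      (fun x : F => (x - x ^ 2 - x ^ 3) * x ^ ((3 ^ n - 1) / 2) - x + x ^ 2) := by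
  set e : ℕ := (3 ^ n - 1) / 2 with he
  obtain ⟨m, hm⟩ := hn2
  have h9 : (3:ℕ) ^ n = 9 ^ m := by rw [hm, ← two_mul, pow_mul]; norm_num
  have h8 : (9:ℕ) ^ m % 8 = 1 := by rw [Nat.pow_mod]; norm_num
  have hm1 : 1 ≤ m := by omega
  have h9le : (9:ℕ) ≤ 9 ^ m := by
    calc (9:ℕ) = 9 ^ 1 := (pow_one 9).symm
    _ ≤ 9 ^ m := Nat.pow_le_pow_right (by norm_num) hm1
  -- characteristic 3
  have hchar : ringChar F = 3 := by
    have h0 : ((3 ^ n : ℕ) : F) = 0 := by rw [← hcard]; exact FiniteField.cast_card_eq_zero F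
    have hp : (ringChar F).Prime := CharP.char_is_prime F (ringChar F)
    have hdvd : ringChar F ∣ 3 ^ n := (CharP.cast_eq_zero_iff F (ringChar F) _).mp h0
    have h3d := hp.dvd_of_dvd_pow hdvd
    exact (Nat.prime_dvd_prime_iff_eq hp Nat.prime_three).mp h3d
  have h3 : (3 : F) = 0 := by
    haveI : CharP F 3 := hchar ▸ ringChar.charP F
    exact_mod_cast CharP.cast_eq_zero F 3
  have h1ne : (1:F) ≠ -1 := by
    intro h
    exact one_ne_zero (α := F) (by linear_combination h3 - h)
  have hneg0 : (-1:F) ≠ 0 := by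
    intro h
    exact one_ne_zero (α := F) (by linear_combination -h)
  have heven : Even e := by
    rw [Nat.even_iff, he, h9]; omega
  have he0 : e ≠ 0 := by rw [he, h9]; omega
  have h0e : (0:F) ^ e = 0 := zero_pow he0
  have hdiv : Fintype.card F / 2 = e := by rw [hcard, he, h9]; omega
  have h2e : 2 * e = Fintype.card F - 1 := by rw [hcard, he, h9]; omega
  have hdich : ∀ x : F, x ≠ 0 → x ^ e = 1 ∨ x ^ e = -1 := by
    intro x hx
    have h := FiniteField.pow_dichotomy (by rw [hchar]; norm_num) hx
    rwa [hdiv] at h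
  have hpow1 : ∀ x : F, x ≠ 0 → x ^ (2*e) = 1 := by
    intro x hx
    rw [h2e]; exact FiniteField.pow_card_sub_one_eq_one x hx
  have key : ∀ x : F, (x ^ e = -1 ∧ (x - x^2 - x^3) * x^e - x + x^2 = x*(x+1)^2) ∨
      (x ^ e ≠ -1 ∧ (x - x^2 - x^3) * x^e - x + x^2 = -x^3) := by
    intro x
    rcases eq_or_ne x 0 with h | h
    · right
      subst h
      refine ⟨?_, by rw [h0e]; ring⟩
      rw [h0e]; exact fun hh => hneg0 hh.symm
    · rcases hdich x h with h1 | h1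
      · right
        refine ⟨by rw [h1]; exact h1ne, ?_⟩
        linear_combination (x - x^2 - x^3) * h1
      · left
        refine ⟨h1, ?_⟩
        linear_combination (x - x^2 - x^3) * h1 - x * h3
  have hinj : Function.Injective
      (fun x : F => (x - x ^ 2 - x ^ 3) * x ^ e - x + x ^ 2) := by
    intro x y hxy
    simp only at hxy
    -- x nonzero / nonsquare helper facts
    rcases key x with ⟨hx, hfx⟩ | ⟨hx, hfx⟩ <;> rcases key y with ⟨hy, hfy⟩ | ⟨hy, hfy⟩
    · -- both nonsquares
      rw [hfx, hfy] at hxy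
      by_contra hne
      have hx0 : x ≠ 0 := by
        intro h; rw [h, h0e] at hx; exact hneg0 hx.symm
      have hsub : x - y ≠ 0 := sub_ne_zero.mpr hne
      have hprod : (x - y) * ((x-y)^2 - (x+y) + 1) = 0 := by
        linear_combination hxy + (x*y^2 - x^2*y - x^2 + y^2) * h3
      have hbr : (x-y)^2 - (x+y) + 1 = 0 := by
        rcases mul_eq_zero.mp hprod with h' | h'
        · exact absurd h' hsub
        · exact h'
      have hd1 : x - y - 1 ≠ 0 := by
        intro h
        have hy' : y = x - 1 := by linear_combination -h
        rw [hy'] at hbr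
        have h2x : (2:F) * x = 0 := by linear_combination -hbr + h3
        have h2ne : (2:F) ≠ 0 := by
          intro h'
          exact one_ne_zero (α := F) (by linear_combination h3 - h')
        have hx0' : x = 0 := by
          rcases mul_eq_zero.mp h2x with h' | h'
          · exact absurd h' h2ne
          · exact h'
        rw [hx0', h0e] at hx
        exact hneg0 hx.symm
      have hx2 : x = -(x - y - 1)^2 := by linear_combination hbr + y * h3
      have hxe1 : x ^ e = 1 := by
        rw [hx2, neg_pow, heven.neg_one_pow, one_mul, ← pow_mul]
        exact hpow1 _ hd1
      exact h1ne (hxe1.symm.trans hx)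
    · -- x nonsquare, y square
      exfalso
      rw [hfx, hfy] at hxy
      have hx0 : x ≠ 0 := by
        intro h; rw [h, h0e] at hx; exact hneg0 hx.symm
      have hxn1 : x + 1 ≠ 0 := by
        intro h
        have hxe : x = -1 := by linear_combination h
        rw [hxe, heven.neg_one_pow] at hx
        exact h1ne hx
      have hy0 : y ≠ 0 := by
        intro h
        rw [h] at hxy
        have hz : x * (x+1)^2 = 0 := by linear_combination hxy
        rcases mul_eq_zero.mp hz with h' | h'
        · exact hx0 h'
        · exact hxn1 (pow_eq_zero_iff (by norm_num) |>.mp h')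
      have hye : y ^ e = 1 := (hdich y hy0).resolve_right hy
      have hL : (x * (x+1)^2) ^ e = -1 := by
        rw [mul_pow, hx, ← pow_mul, hpow1 _ hxn1, mul_one]
      have hR : (-y^3) ^ e = 1 := by
        rw [neg_pow, heven.neg_one_pow, one_mul, ← pow_mul, mul_comm, pow_mul, hye, one_pow]
      rw [hxy, hR] at hL
      exact h1ne hL
    · -- x square, y nonsquare (symmetric)
      exfalso
      rw [hfx, hfy] at hxy
      have hy0' : y ≠ 0 := by
        intro h; rw [h, h0e] at hy; exact hneg0 hy.symm
      have hyn1 : y + 1 ≠ 0 := by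
        intro h
        have hye : y = -1 := by linear_combination h
        rw [hye, heven.neg_one_pow] at hy
        exact h1ne hy
      have hx0 : x ≠ 0 := by
        intro h
        rw [h] at hxy
        have hz : y * (y+1)^2 = 0 := by linear_combination -hxy
        rcases mul_eq_zero.mp hz with h' | h'
        · exact hy0' h'
        · exact hyn1 (pow_eq_zero_iff (by norm_num) |>.mp h')
      have hxe : x ^ e = 1 := (hdich x hx0).resolve_right hx
      have hL : (y * (y+1)^2) ^ e = -1 := by
        rw [mul_pow, hy, ← pow_mul, hpow1 _ hyn1, mul_one]
      have hR : (-x^3) ^ e = 1 := by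
        rw [neg_pow, heven.neg_one_pow, one_mul, ← pow_mul, mul_comm, pow_mul, hxe, one_pow]
      rw [← hxy, hR] at hL
      exact h1ne hL
    · -- both squares
      rw [hfx, hfy] at hxy
      have h3eq : (x - y)^3 = 0 := by
        linear_combination -hxy + (x*y^2 - x^2*y) * h3
      have := pow_eq_zero_iff (n := 3) (by norm_num) |>.mp h3eq
      exact sub_eq_zero.mp this
  exact Finite.injective_iff_bijective.mp hinj
end

section
/- Let q be an odd prime power, C_0 the nonzero squares of F_q and C_1 the nonsquares. Let f_0, f_1 : F_q → F_q, and define f : F_q → F_q by f(0) = 0, f = f_0 on C_0, f = f_1 on C_1. Assume f is a bijection of F_q, that f_0 maps C_0 into C_1 and f_1 maps C_1 into C_0, and let g_0, g_1 : F_q → F_q satisfy g_0(0) = g_1(0) = 0, g_0(f_0(c)) = c for all c ∈ C_0, and g_1(f_1(c)) = c for all c ∈ C_1. Then the map h(x) = (1/2)g_0(x)(1 - x^((q-1)/2)) + (1/2)g_1(x)(1 + x^((q-1)/2)) satisfies h(f(c)) = c for all c ∈ F_q. -/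
/-! On nonzero `x` Euler's criterion gives `x ^ ((q - 1) / 2) = 1` for squares and `-1` for
nonsquares, so `h` agrees with `g₁` on squares and with `g₀` on nonsquares. Since `f` sends
squares to nonsquares through `f₀` and nonsquares to squares through `f₁`, `h ∘ f` is `g₀ ∘ f₀`
on squares and `g₁ ∘ f₁` on nonsquares, i.e. the identity; at `0` both halves vanish. -/

namespace FiniteField

variable {F : Type*} [Field F] [Fintype F]

theorem ringChar_ne_two_of_odd_card (hodd : Odd (Fintype.card F)) : ringChar F ≠ 2 := by
  rw [Ne, even_card_iff_char_two, Nat.odd_iff.mp hodd]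
  exact one_ne_zero

theorem card_sub_one_div_two_eq_card_div_two (hF : ringChar F ≠ 2) :
    (Fintype.card F - 1) / 2 = Fintype.card F / 2 := by
  have := odd_card_of_char_ne_two hF
  omega

theorem pow_card_sub_one_div_two_of_isSquare (hF : ringChar F ≠ 2) {x : F} (hx : x ≠ 0)
    (hsq : IsSquare x) : x ^ ((Fintype.card F - 1) / 2) = 1 := by
  rw [card_sub_one_div_two_eq_card_div_two hF]
  exact (isSquare_iff hF hx).mp hsq

theorem pow_card_sub_one_div_two_of_not_isSquare (hF : ringChar F ≠ 2) {x : F}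
    (hsq : ¬IsSquare x) : x ^ ((Fintype.card F - 1) / 2) = -1 := by
  have hx : x ≠ 0 := by rintro rfl; exact hsq IsSquare.zero
  rw [card_sub_one_div_two_eq_card_div_two hF]
  exact (pow_dichotomy hF hx).resolve_left (mt (isSquare_iff hF hx).mpr hsq)

/-- The map `h` of the statement. -/
def squareClassGlue (g₀ g₁ : F → F) (x : F) : F :=
  (1 / 2) * g₀ x * (1 - x ^ ((Fintype.card F - 1) / 2)) +
  (1 / 2) * g₁ x * (1 + x ^ ((Fintype.card F - 1) / 2))

theorem squareClassGlue_zero {g₀ g₁ : F → F} (hg₀ : g₀ 0 = 0) (hg₁ : g₁ 0 = 0) :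
    squareClassGlue g₀ g₁ 0 = 0 := by
  simp [squareClassGlue, hg₀, hg₁]

theorem squareClassGlue_of_isSquare (hF : ringChar F ≠ 2) (g₀ g₁ : F → F) {x : F} (hx : x ≠ 0)
    (hsq : IsSquare x) : squareClassGlue g₀ g₁ x = g₁ x := by
  have h2 : (2 : F) ≠ 0 := Ring.two_ne_zero hF
  rw [squareClassGlue, pow_card_sub_one_div_two_of_isSquare hF hx hsq]
  field_simp
  ring

theorem squareClassGlue_of_not_isSquare (hF : ringChar F ≠ 2) (g₀ g₁ : F → F) {x : F}
    (hsq : ¬IsSquare x) : squareClassGlue g₀ g₁ x = g₀ x := by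
  have h2 : (2 : F) ≠ 0 := Ring.two_ne_zero hF
  rw [squareClassGlue, pow_card_sub_one_div_two_of_not_isSquare hF hsq]
  field_simp
  ring

end FiniteField

theorem stmt_5_general {F : Type*} [Field F] [Fintype F] (hodd : Odd (Fintype.card F))
    (f₀ f₁ f g₀ g₁ : F → F)
    (C₀ C₁ : Set F)
    (hC₀ : C₀ = {x : F | x ≠ 0 ∧ IsSquare x})
    (hC₁ : C₁ = {x : F | x ≠ 0 ∧ ¬ IsSquare x})
    (hf0 : f 0 = 0)
    (hfs : ∀ x ∈ C₀, f x = f₀ x)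
    (hfn : ∀ x ∈ C₁, f x = f₁ x)
    (hmaps0 : Set.MapsTo f₀ C₀ C₁)
    (hmaps1 : Set.MapsTo f₁ C₁ C₀)
    (hg00 : g₀ 0 = 0) (hg10 : g₁ 0 = 0)
    (hg0 : ∀ c ∈ C₀, g₀ (f₀ c) = c)
    (hg1 : ∀ c ∈ C₁, g₁ (f₁ c) = c) :
    ∀ c : F,
      (1 / 2) * g₀ (f c) * (1 - (f c) ^ ((Fintype.card F - 1) / 2)) +
      (1 / 2) * g₁ (f c) * (1 + (f c) ^ ((Fintype.card F - 1) / 2)) = c := by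
  intro c
  change FiniteField.squareClassGlue g₀ g₁ (f c) = c
  have hF := FiniteField.ringChar_ne_two_of_odd_card hodd
  rcases eq_or_ne c 0 with rfl | hc
  · rw [hf0, FiniteField.squareClassGlue_zero hg00 hg10]
  by_cases hsq : IsSquare c
  · have hc₀ : c ∈ C₀ := hC₀ ▸ ⟨hc, hsq⟩
    have hf₀c : f₀ c ∈ C₁ := hmaps0 hc₀
    rw [hC₁] at hf₀c
    rw [hfs c hc₀, FiniteField.squareClassGlue_of_not_isSquare hF _ _ hf₀c.2, hg0 c hc₀]
  · have hc₁ : c ∈ C₁ := hC₁ ▸ ⟨hc, hsq⟩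
    have hf₁c : f₁ c ∈ C₀ := hmaps1 hc₁
    rw [hC₀] at hf₁c
    rw [hfn c hc₁, FiniteField.squareClassGlue_of_isSquare hF _ _ hf₁c.1 hf₁c.2, hg1 c hc₁]

theorem stmt_5 {F : Type*} [Field F] [Fintype F] (hodd : Odd (Fintype.card F))
    (f₀ f₁ f g₀ g₁ : F → F)
    (C₀ C₁ : Set F)
    (hC₀ : C₀ = {x : F | x ≠ 0 ∧ IsSquare x})
    (hC₁ : C₁ = {x : F | x ≠ 0 ∧ ¬ IsSquare x})
    (hf0 : f 0 = 0)
    (hfs : ∀ x ∈ C₀, f x = f₀ x)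
    (hfn : ∀ x ∈ C₁, f x = f₁ x)
    (hbij : Function.Bijective f)
    (hmaps0 : Set.MapsTo f₀ C₀ C₁)
    (hmaps1 : Set.MapsTo f₁ C₁ C₀)
    (hg00 : g₀ 0 = 0) (hg10 : g₁ 0 = 0)
    (hg0 : ∀ c ∈ C₀, g₀ (f₀ c) = c)
    (hg1 : ∀ c ∈ C₁, g₁ (f₁ c) = c) :
    ∀ c : F,
      (1 / 2) * g₀ (f c) * (1 - (f c) ^ ((Fintype.card F - 1) / 2)) +
      (1 / 2) * g₁ (f c) * (1 + (f c) ^ ((Fintype.card F - 1) / 2)) = c :=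
  stmt_5_general hodd f₀ f₁ f g₀ g₁ C₀ C₁ hC₀ hC₁ hf0 hfs hfn hmaps0 hmaps1 hg00 hg10 hg0 hg1
end

section
/- Let q > 3 be an odd prime power, C_0 the nonzero squares of F_q, C_1 the nonsquares, and s, t ∈ {0,1}. Let f_s be a polynomial over F_q whose evaluation map restricts to a bijection from C_s onto C_t. For each integer i with (q+1)/2 ≤ i ≤ q-2, let b_{i,k} ∈ F_q (0 ≤ k ≤ q-1) be the coefficients of the remainder of f_s(x)^(q-1-i) upon division by x^q - x, i.e. f_s(x)^(q-1-i) ≡ Σ_{k=0}^{q-1} b_{i,k} x^k (mod x^q - x). Then for every a ∈ C_s: Σ_{i=(q+1)/2}^{q-2} (-1)^(s+t) · (b_{i,(q-3)/2} + (-1)^s · b_{i,q-2}) · f_s(a)^(i - (q-1)/2) = a. -/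
/-!
The reduction of `f ^ m` modulo `X ^ q - X` has the same values on `F_q` as `f ^ m`, so
the orthogonality relations `∑_{c ∈ F_q} c ^ e = -[q - 1 ∣ e]` (for `e > 0`) recover its
coefficients: `b_{i,k} = -∑_c f(c) ^ (q - 1 - i) * c ^ (q - 1 - k)`. With `q = 2r + 1` the
left-hand side becomes `-(-1)^(s+t) ∑_c c (c^r + (-1)^s) ∑_{n=1}^{r-1} f(a)^(r-n) f(c)^n`.
The weight `c (c^r + (-1)^s)` vanishes off `C_s` and is `2 (-1)^s c` on `C_s`; there
`f(c)^r = f(a)^r = (-1)^t`, so the inner truncated geometric sum is `(-1)^t (r - 1)` when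
`f(c) = f(a)`, i.e. `c = a`, and `-(-1)^t` otherwise. The weights sum to zero as
`r + 1 < q - 1`, so what remains is `-2r a = a`.
-/

open Polynomial Finset

theorem sum_Icc_pow_mul_pow_of_pow_eq {R : Type*} [CommRing R] [IsDomain R] [DecidableEq R]
    {r : ℕ} (hr : 0 < r) {x y : R} (h : x ^ r = y ^ r) :
    ∑ j ∈ Icc 1 (r - 1), x ^ (r - j) * y ^ j =
      x ^ r * ((if x = y then (r : R) else 0) - 1) := by
  have hsplit : ∑ j ∈ range r, x ^ (r - j) * y ^ j =
      x ^ r + ∑ j ∈ Icc 1 (r - 1), x ^ (r - j) * y ^ j := by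
    rw [range_eq_Ico, sum_eq_sum_Ico_succ_bot hr,
      Icc_sub_one_right_eq_Ico_of_not_isMin (not_isMin_iff_ne_bot.2 hr.ne')]
    simp
  suffices hrange : ∑ j ∈ range r, x ^ (r - j) * y ^ j = if x = y then r * x ^ r else 0 by
    split_ifs at hrange ⊢ <;> linear_combination hrange - hsplit
  split_ifs with hxy
  · subst hxy
    rw [sum_congr rfl fun j hj ↦ by rw [← pow_add, Nat.sub_add_cancel (mem_range.1 hj).le]]
    simp
  · have hgeom := geom_sum₂_mul y x r
    rw [← h, sub_self, mul_eq_zero, or_iff_left (sub_ne_zero.2 (Ne.symm hxy))] at hgeom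
    calc ∑ j ∈ range r, x ^ (r - j) * y ^ j
          = x * ∑ j ∈ range r, y ^ j * x ^ (r - 1 - j) := by
          rw [mul_sum]
          refine sum_congr rfl fun j hj ↦ ?_
          rw [show r - j = r - 1 - j + 1 by have := mem_range.1 hj; omega, pow_succ]
          ring
      _ = 0 := by rw [hgeom, mul_zero]

namespace FiniteField

variable {F : Type*} [Field F] [Fintype F]

theorem sum_pow_eq_ite {e : ℕ} (he : e ≠ 0) :
    ∑ x : F, x ^ e = if Fintype.card F - 1 ∣ e then -1 else 0 := by
  classical
  rw [← sum_pow_units, ← Fintype.sum_subtype_add_sum_subtype (· ≠ (0 : F)),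
    ← (unitsEquivNeZero (G₀ := F)).sum_comp, Fintype.sum_eq_zero (α := {x : F // ¬x ≠ 0})]
  · simp
  · rintro ⟨x, hx⟩
    simp [not_not.mp hx, he]

theorem coeff_eq_neg_sum_eval_mul_pow {R : F[X]} (hR : R.natDegree < Fintype.card F) {k : ℕ}
    (hk₁ : 1 ≤ k) (hk₂ : k ≤ Fintype.card F - 2) :
    R.coeff k = -∑ c : F, R.eval c * c ^ (Fintype.card F - 1 - k) := by
  set q := Fintype.card F
  have horth : ∀ j < q, ∑ c : F, c ^ (j + (q - 1 - k)) = if j = k then -1 else 0 := by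
    intro j hj
    rw [sum_pow_eq_ite (by omega)]
    refine if_congr ⟨fun h ↦ ?_, fun h ↦ by rw [h, Nat.add_sub_cancel' (by omega)]⟩ rfl rfl
    have := Nat.eq_of_dvd_of_lt_two_mul (by omega) h (by omega)
    omega
  calc R.coeff k = -∑ j ∈ range q, R.coeff j * ∑ c : F, c ^ (j + (q - 1 - k)) := by
        rw [sum_congr rfl fun j hj ↦ by rw [horth j (mem_range.1 hj)]]
        simp [show k < q by omega]
    _ = -∑ c : F, R.eval c * c ^ (q - 1 - k) := by
        simp_rw [eval_eq_sum_range' hR, sum_mul, mul_sum, pow_add, mul_assoc]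
        rw [sum_comm]

theorem natDegree_modByMonic_X_pow_card_sub_X_lt (Q : F[X]) :
    (Q %ₘ (X ^ Fintype.card F - X)).natDegree < Fintype.card F := by
  have hq : 1 < Fintype.card F := Fintype.one_lt_card
  have hdeg := X_pow_card_sub_X_natDegree_eq F hq
  calc _ < (X ^ Fintype.card F - X : F[X]).natDegree := natDegree_modByMonic_lt Q ?_ fun h ↦ ?_
    _ = Fintype.card F := hdeg
  · exact monic_X_pow_sub (degree_X.trans_lt (by exact_mod_cast hq))
  · rw [h, natDegree_one] at hdeg
    omega

theorem eval_modByMonic_X_pow_card_sub_X (Q : F[X]) (c : F) :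
    (Q %ₘ (X ^ Fintype.card F - X)).eval c = Q.eval c := by
  conv_rhs => rw [← modByMonic_add_div Q (X ^ Fintype.card F - X)]
  simp [pow_card]

theorem coeff_modByMonic_X_pow_card_sub_X (Q : F[X]) {k : ℕ} (hk₁ : 1 ≤ k)
    (hk₂ : k ≤ Fintype.card F - 2) :
    (Q %ₘ (X ^ Fintype.card F - X)).coeff k =
      -∑ c : F, Q.eval c * c ^ (Fintype.card F - 1 - k) := by
  simp_rw [coeff_eq_neg_sum_eval_mul_pow (natDegree_modByMonic_X_pow_card_sub_X_lt Q) hk₁ hk₂,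
    eval_modByMonic_X_pow_card_sub_X]

theorem sum_coeff_pow_modByMonic_mul_pow {r : ℕ} (hq : Fintype.card F = 2 * r + 1) (hr : 1 < r)
    (Q : F[X]) (ε u : F) :
    ∑ n ∈ Icc 1 (r - 1), ((Q ^ n %ₘ (X ^ Fintype.card F - X)).coeff (r - 1) +
        ε * (Q ^ n %ₘ (X ^ Fintype.card F - X)).coeff (2 * r - 1)) * u ^ (r - n) =
      -∑ c : F, (c ^ (r + 1) + ε * c) * ∑ n ∈ Icc 1 (r - 1), u ^ (r - n) * Q.eval c ^ n := by
  have hcoeff : ∀ n k, 1 ≤ k → k ≤ 2 * r - 1 →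
      (Q ^ n %ₘ (X ^ Fintype.card F - X)).coeff k = -∑ c, c ^ (2 * r - k) * Q.eval c ^ n := by
    intro n k hk₁ hk₂
    rw [coeff_modByMonic_X_pow_card_sub_X _ (by omega) (by omega), hq, Nat.add_sub_cancel]
    simp only [eval_pow, mul_comm]
  simp only [hcoeff _ (r - 1) (by omega) (by omega), hcoeff _ (2 * r - 1) (by omega) le_rfl,
    show 2 * r - (r - 1) = r + 1 by omega, show 2 * r - (2 * r - 1) = 1 by omega, pow_one,
    mul_sum, sum_mul, ← sum_neg_distrib, ← sum_add_distrib]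
  rw [sum_comm]
  exact sum_congr rfl fun c _ ↦ sum_congr rfl fun n _ ↦ by ring

theorem not_isSquare_iff (hF : ringChar F ≠ 2) {a : F} (ha : a ≠ 0) :
    ¬IsSquare a ↔ a ^ (Fintype.card F / 2) = -1 := by
  rw [isSquare_iff hF ha]
  have h₁ := Ring.neg_one_ne_one_of_char_ne_two hF
  rcases pow_dichotomy hF ha with h | h <;> simp [h, h₁, h₁.symm]

theorem ite_setOf_isSquare_eq (hF : ringChar F ≠ 2) {s : ℕ} (hs : s = 0 ∨ s = 1) :
    (if s = 0 then {x : F | x ≠ 0 ∧ IsSquare x} else {x : F | x ≠ 0 ∧ ¬IsSquare x}) =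
      {x | x ≠ 0 ∧ x ^ (Fintype.card F / 2) = (-1) ^ s} := by
  ext x
  rcases hs with rfl | rfl
  · simpa using and_congr_right (isSquare_iff hF)
  · simpa using and_congr_right (not_isSquare_iff hF)

theorem pow_add_one_add_neg_one_pow_mul_eq_zero (hF : ringChar F ≠ 2) (s : ℕ) {x : F}
    (hx : ¬(x ≠ 0 ∧ x ^ (Fintype.card F / 2) = (-1) ^ s)) :
    x ^ (Fintype.card F / 2 + 1) + (-1) ^ s * x = 0 := by
  by_cases hx0 : x = 0
  · simp [hx0]
  have hpow : x ^ (Fintype.card F / 2) = -(-1) ^ s := by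
    rcases pow_dichotomy hF hx0 with h | h <;> rcases neg_one_pow_eq_or F s with h' | h' <;>
      simp_all
  rw [pow_succ, hpow]
  ring

theorem sum_mul_sum_pow_mul_pow_of_bijOn {r : ℕ}
    (hq : Fintype.card F = 2 * r + 1) (hr : 1 < r) {s t : ℕ} {f : F → F}
    (hf : Set.BijOn f {x | x ≠ 0 ∧ x ^ r = (-1) ^ s} {x | x ≠ 0 ∧ x ^ r = (-1) ^ t}) {a : F}
    (ha : a ≠ 0 ∧ a ^ r = (-1) ^ s) :
    ∑ c : F, (c ^ (r + 1) + (-1) ^ s * c) * ∑ n ∈ Icc 1 (r - 1), f a ^ (r - n) * f c ^ n =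
      2 * r * (-1) ^ (s + t) * a := by
  classical
  have hF : ringChar F ≠ 2 := fun h ↦ by have := even_card_of_char_two h; omega
  have hr2 : Fintype.card F / 2 = r := by omega
  set w : F → F := fun c ↦ c ^ (r + 1) + (-1) ^ s * c
  have hterm : ∀ c, w c * ∑ n ∈ Icc 1 (r - 1), f a ^ (r - n) * f c ^ n =
      (-1) ^ t * (w c * (if c = a then (r : F) else 0) - w c) := by
    intro c
    by_cases hc : c ≠ 0 ∧ c ^ r = (-1) ^ s
    · have hfa := (hf.mapsTo ha).2
      have hfc := (hf.mapsTo hc).2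
      rw [sum_Icc_pow_mul_pow_of_pow_eq (by omega) (hfa.trans hfc.symm), hfa,
        hf.injOn.eq_iff ha hc, eq_comm (a := a)]
      ring
    · have hwc : w c = 0 := by
        simpa only [hr2] using pow_add_one_add_neg_one_pow_mul_eq_zero hF s (hr2 ▸ hc)
      simp [hwc]
  have hw : ∑ c, w c = 0 := by
    rw [sum_add_distrib, ← mul_sum, sum_pow_lt_card_sub_one F _ (by omega)]
    simpa using sum_pow_lt_card_sub_one F 1 (by omega)
  rw [sum_congr rfl fun c _ ↦ hterm c, ← mul_sum, sum_sub_distrib, hw]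
  simp only [mul_ite, mul_zero, sum_ite_eq', mem_univ, if_true, w, pow_succ, ha.2, pow_add]
  ring

end FiniteField

theorem stmt_7 {F : Type*} [Field F] [Fintype F] (hodd : Odd (Fintype.card F))
    (hq3 : 3 < Fintype.card F)
    (s t : ℕ) (hs : s = 0 ∨ s = 1) (ht : t = 0 ∨ t = 1)
    (Cs Ct : Set F)
    (hCs : Cs = if s = 0 then {x : F | x ≠ 0 ∧ IsSquare x}
                else {x : F | x ≠ 0 ∧ ¬ IsSquare x})
    (hCt : Ct = if t = 0 then {x : F | x ≠ 0 ∧ IsSquare x}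
                else {x : F | x ≠ 0 ∧ ¬ IsSquare x})
    (P : Polynomial F)
    (hbij : Set.BijOn (fun a => P.eval a) Cs Ct)
    (b : ℕ → ℕ → F)
    (hb : ∀ i k, b i k = ((P ^ (Fintype.card F - 1 - i)) %ₘ
        (X ^ (Fintype.card F) - X)).coeff k) :
    ∀ a ∈ Cs,
      ∑ i ∈ Finset.Icc ((Fintype.card F + 1) / 2) (Fintype.card F - 2),
        (-1 : F) ^ (s + t) *
          (b i ((Fintype.card F - 3) / 2) + (-1 : F) ^ s * b i (Fintype.card F - 2)) *
          (P.eval a) ^ (i - (Fintype.card F - 1) / 2) = a := by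
  intro a ha
  obtain ⟨r, hq⟩ := hodd
  have hF : ringChar F ≠ 2 := fun h ↦ by have := FiniteField.even_card_of_char_two h; omega
  rw [FiniteField.ite_setOf_isSquare_eq hF hs, show Fintype.card F / 2 = r by omega] at hCs
  rw [FiniteField.ite_setOf_isSquare_eq hF ht, show Fintype.card F / 2 = r by omega] at hCt
  subst hCs hCt
  have hcard : (2 * r + 1 : F) = 0 := by exact_mod_cast hq ▸ FiniteField.cast_card_eq_zero F
  have hsign : (-1 : F) ^ (s + t) * (-1) ^ (s + t) = 1 := by
    rw [← mul_pow, neg_one_mul, neg_neg, one_pow]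
  calc _ = ∑ n ∈ Icc 1 (r - 1), (-1) ^ (s + t) *
          (((P ^ n %ₘ (X ^ Fintype.card F - X)).coeff (r - 1) + (-1) ^ s *
            (P ^ n %ₘ (X ^ Fintype.card F - X)).coeff (2 * r - 1)) * P.eval a ^ (r - n)) := by
        refine sum_nbij' (2 * r - ·) (2 * r - ·) ?_ ?_ ?_ ?_ ?_ <;> intro i hi <;>
          simp only [mem_Icc] at hi ⊢
        iterate 4 omega
        rw [hb, hb, ← mul_assoc, show Fintype.card F - 1 - i = 2 * r - i by omega,
          show (Fintype.card F - 3) / 2 = r - 1 by omega,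
          show Fintype.card F - 2 = 2 * r - 1 by omega,
          show i - (Fintype.card F - 1) / 2 = r - (2 * r - i) by omega]
    _ = a := by
        rw [← mul_sum, FiniteField.sum_coeff_pow_modByMonic_mul_pow hq (by omega),
          FiniteField.sum_mul_sum_pow_mul_pow_of_bijOn hq (by omega) hbij ha]
        linear_combination (-2 * r * a) * hsign - a * hcard
end

section
/- Let p be a prime, q a power of p, m an integer (possibly negative), and k a natural number with 0 ≤ k < q. Then the generalized binomial coefficients satisfy C(q + m, k) ≡ C(m, k) (mod p), where C(m, k) = m(m-1)···(m-k+1)/k! is the integer-valued generalized binomial coefficient. -/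
/-!
Vandermonde's identity writes `C(q + m, k)` as `∑_{i + j = k} C(q, i) C(m, j)`. The term `i = 0`
is `C(m, k)`, and every other term has `0 < i ≤ k < q = p ^ e`, so `p ∣ C(q, i)`.
-/

open Finset

namespace Ring

variable {R : Type*} [CommRing R] [BinomialRing R]

theorem choose_add_sub_choose_eq_sum (r s : R) (k : ℕ) :
    choose (r + s) k - choose s k =
      ∑ i ∈ range k, choose r (i + 1) * choose s (k - (i + 1)) := by
  rw [add_choose_eq k (Commute.all r s), Nat.sum_antidiagonal_eq_sum_range_succ_mk,
    sum_range_succ', choose_zero_right, Nat.sub_zero, one_mul, add_sub_cancel_right]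

theorem dvd_choose_add_sub_choose {d r : R} (s : R) {k : ℕ}
    (hd : ∀ i, 0 < i → i ≤ k → d ∣ choose r i) :
    d ∣ choose (r + s) k - choose s k := by
  rw [choose_add_sub_choose_eq_sum]
  exact dvd_sum fun i hi => (hd (i + 1) i.succ_pos (mem_range.mp hi)).mul_right _

theorem prime_dvd_choose_prime_pow_add_sub_choose {p : ℕ} (hp : p.Prime) (e : ℕ) (s : R) {k : ℕ}
    (hk : k < p ^ e) :
    (p : R) ∣ choose (((p ^ e : ℕ) : R) + s) k - choose s k := by
  refine dvd_choose_add_sub_choose s fun i hi hik => ?_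
  rw [choose_natCast]
  exact Nat.cast_dvd_cast (hp.dvd_choose_pow (n := e) hi.ne' (by omega))

end Ring

theorem stmt_8 (p : ℕ) (hp : p.Prime) (e : ℕ) (q : ℕ) (hq : q = p ^ e)
    (m : ℤ) (k : ℕ) (hk : k < q) :
    Ring.choose ((q : ℤ) + m) k ≡ Ring.choose m k [ZMOD p] := by
  subst hq
  exact (Int.modEq_iff_dvd.mpr (Ring.prime_dvd_choose_prime_pow_add_sub_choose hp e m hk)).symm
end

section
/- Let n ≥ 1 and let i be an integer with 1 ≤ i < 3^n. Then the binomial coefficient C(3i, i-1) is not divisible by 3 if and only if i = (3^k - 1)/2 for some integer k with 1 ≤ k ≤ n. -/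
/-!
By Lucas' theorem, `¬ 3 ∣ C(3m + r, 3k + s)` for digits `r, s < 3` holds iff `s ≤ r` and
`¬ 3 ∣ C(m, k)`. Peeling off base-3 digits of `C(3i, i - 1)` this way forces `i - 1 ≡ 0`, and
then `C(3c + 1, c)` survives only while the digits of `c` are `1`, ending in `c = 0` (the
lowest nonzero digit of `d` kills `C(3d, d)`). So `i - 1 = (1…10)₃`, i.e. `2i + 1` is a power
of `3`.
-/

theorem Nat.exists_eq_mul_add_of_pos {p : ℕ} (hp : 0 < p) (n : ℕ) :
    ∃ q r, r < p ∧ n = p * q + r :=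
  ⟨n / p, n % p, Nat.mod_lt n hp, (Nat.div_add_mod n p).symm⟩

theorem Nat.Prime.dvd_choose_iff_lt {p r s : ℕ} (hp : p.Prime) (hr : r < p) :
    p ∣ r.choose s ↔ r < s := by
  refine ⟨fun hdvd => ?_, fun hrs => by simp [Nat.choose_eq_zero_of_lt hrs]⟩
  by_contra! hsr
  exact hp.one_lt.ne' ((hp.coprime_choose_of_lt hr hsr).eq_one_of_dvd hdvd)

theorem Nat.Prime.not_dvd_choose_mul_add_iff {p m k r s : ℕ} (hp : p.Prime) (hr : r < p)
    (hs : s < p) :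
    ¬ p ∣ (p * m + r).choose (p * k + s) ↔ s ≤ r ∧ ¬ p ∣ m.choose k := by
  have := Fact.mk hp
  have lucas := Choose.choose_modEq_choose_mod_mul_choose_div_nat (p := p) (n := p * m + r)
    (k := p * k + s)
  simp only [Nat.mul_add_mod_self_left, Nat.mod_eq_of_lt hr, Nat.mod_eq_of_lt hs,
    Nat.mul_add_div hp.pos, Nat.div_eq_of_lt hr, Nat.div_eq_of_lt hs, add_zero] at lucas
  rw [lucas.dvd_iff dvd_rfl, hp.dvd_mul, hp.dvd_choose_iff_lt hr]
  omega

theorem not_three_dvd_choose_three_mul_self_iff (d : ℕ) :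
    ¬ 3 ∣ (3 * d).choose d ↔ d = 0 := by
  induction d using Nat.strong_induction_on with
  | _ d ih =>
    rcases Nat.eq_zero_or_pos d with rfl | hd
    · simp
    obtain ⟨e, s, hs, rfl⟩ := Nat.exists_eq_mul_add_of_pos three_pos d
    rw [← add_zero (3 * (3 * e + s)), Nat.prime_three.not_dvd_choose_mul_add_iff three_pos hs]
    rcases Nat.eq_zero_or_pos s with rfl | hs
    · rw [add_zero, ih e (by omega)]
      omega
    · omega

theorem exists_two_mul_add_one_eq_three_pow_iff {d s : ℕ} (hs : s < 3) :
    (∃ t, 2 * (3 * d + s) + 1 = 3 ^ t) ↔ s = 0 ∧ d = 0 ∨ s = 1 ∧ ∃ t, 2 * d + 1 = 3 ^ t := by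
  constructor
  · rintro ⟨_ | t, ht⟩
    · omega
    · rw [pow_succ] at ht
      exact .inr ⟨by omega, t, by omega⟩
  · rintro (⟨rfl, rfl⟩ | ⟨rfl, t, ht⟩)
    · exact ⟨0, rfl⟩
    · exact ⟨t + 1, by rw [pow_succ]; omega⟩

theorem not_three_dvd_choose_three_mul_add_one_self_iff (c : ℕ) :
    ¬ 3 ∣ (3 * c + 1).choose c ↔ ∃ t, 2 * c + 1 = 3 ^ t := by
  induction c using Nat.strong_induction_on with
  | _ c ih =>
    obtain ⟨d, s, hs, rfl⟩ := Nat.exists_eq_mul_add_of_pos three_pos c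
    rw [Nat.prime_three.not_dvd_choose_mul_add_iff (by norm_num) hs,
      exists_two_mul_add_one_eq_three_pow_iff hs]
    interval_cases s
    · simp [not_three_dvd_choose_three_mul_self_iff]
    · simp [ih d (by omega)]
    · omega

theorem not_three_dvd_choose_three_mul_sub_one_iff {i : ℕ} (hi : 1 ≤ i) :
    ¬ 3 ∣ (3 * i).choose (i - 1) ↔ ∃ k, 1 ≤ k ∧ 2 * i + 1 = 3 ^ k := by
  obtain ⟨c, s, hs, hcs⟩ := Nat.exists_eq_mul_add_of_pos three_pos (i - 1)
  rw [hcs, show 3 * i = 3 * (3 * c + s + 1) + 0 by omega,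
    Nat.prime_three.not_dvd_choose_mul_add_iff three_pos hs]
  constructor
  · rintro ⟨hs0, hc⟩
    obtain rfl : s = 0 := by omega
    obtain ⟨t, ht⟩ := (not_three_dvd_choose_three_mul_add_one_self_iff c).mp hc
    exact ⟨t + 1, by omega, by rw [pow_succ]; omega⟩
  · rintro ⟨_ | k, hk, hik⟩
    · omega
    · rw [pow_succ] at hik
      obtain rfl : s = 0 := by omega
      exact ⟨le_rfl, (not_three_dvd_choose_three_mul_add_one_self_iff c).mpr ⟨k, by omega⟩⟩

theorem stmt_9_general (n : ℕ) (i : ℕ) (hi1 : 1 ≤ i) (hi2 : i < 3 ^ n) :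
    ¬ (3 ∣ Nat.choose (3 * i) (i - 1)) ↔
      ∃ k : ℕ, 1 ≤ k ∧ k ≤ n ∧ i = (3 ^ k - 1) / 2 := by
  rw [not_three_dvd_choose_three_mul_sub_one_iff hi1]
  constructor
  · rintro ⟨k, hk, hik⟩
    have hkn : 3 ^ k < 3 ^ (n + 1) := by rw [pow_succ]; omega
    rw [Nat.pow_lt_pow_iff_right (by norm_num)] at hkn
    exact ⟨k, hk, by omega, by omega⟩
  · rintro ⟨k, hk, -, rfl⟩
    have hodd : 3 ^ k % 2 = 1 := Nat.odd_iff.mp (Odd.pow (by decide))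
    have hpos : 1 ≤ 3 ^ k := Nat.one_le_pow _ _ three_pos
    exact ⟨k, hk, by omega⟩

theorem stmt_9 (n : ℕ) (hn : 1 ≤ n) (i : ℕ) (hi1 : 1 ≤ i) (hi2 : i < 3 ^ n) :
    ¬ (3 ∣ Nat.choose (3 * i) (i - 1)) ↔
      ∃ k : ℕ, 1 ≤ k ∧ k ≤ n ∧ i = (3 ^ k - 1) / 2 :=
  stmt_9_general n i hi1 hi2
end

section
/- Let n ≥ 1 and let i be an integer with (3^n - 1)/2 < i < 3^n. Then the binomial coefficient C(3i, i-1) is divisible by 3. -/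
private theorem lucas3 (a b : ℕ) :
    Nat.choose a b ≡ Nat.choose (a % 3) (b % 3) * Nat.choose (a / 3) (b / 3) [MOD 3] := by
  haveI : Fact (Nat.Prime 3) := ⟨by norm_num⟩
  exact Choose.choose_modEq_choose_mod_mul_choose_div_nat (p := 3)

private theorem aux10 : ∀ m : ℕ, ∀ j : ℕ, (3 ^ m - 1) / 2 < j → j < 3 ^ m → j % 3 ≤ 1 →
    3 ∣ Nat.choose j (j / 3) := by
  intro m
  induction m with
  | zero => intro j h1 h2 _; omega
  | succ m ih =>
    intro j h1 h2 hr
    have hP : 3 ^ m % 2 = 1 := Nat.pow_mod 3 m 2 ▸ by simp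
    have hQ : 3 ^ (m + 1) = 3 * 3 ^ m := by ring
    have hmod : Nat.choose j (j / 3) % 3 =
        (Nat.choose (j % 3) (j / 3 % 3) * Nat.choose (j / 3) (j / 3 / 3)) % 3 := lucas3 j (j / 3)
    by_cases hc : j / 3 % 3 ≤ j % 3
    · -- digit choose is 1, recurse
      have h1' : Nat.choose (j % 3) (j / 3 % 3) = 1 := by
        interval_cases h : (j % 3) <;> interval_cases h2 : (j / 3 % 3) <;> simp
      rw [h1', one_mul] at hmod
      have hrec : 3 ∣ Nat.choose (j / 3) (j / 3 / 3) := by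
        apply ih
        · omega
        · omega
        · omega
      omega
    · -- digit choose is 0
      have h0 : Nat.choose (j % 3) (j / 3 % 3) = 0 := Nat.choose_eq_zero_of_lt (by omega)
      rw [h0, zero_mul] at hmod
      omega

theorem stmt_10 (n : ℕ) (hn : 1 ≤ n) (i : ℕ) (hi1 : (3 ^ n - 1) / 2 < i)
    (hi2 : i < 3 ^ n) :
    3 ∣ Nat.choose (3 * i) (i - 1) := by
  have hP : 3 ^ (n - 1) % 2 = 1 := Nat.pow_mod 3 (n - 1) 2 ▸ by simp
  have hQ : 3 ^ n = 3 * 3 ^ (n - 1) := by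
    conv_lhs => rw [show n = (n - 1) + 1 by omega]
    ring
  have hi : 2 ≤ i := by omega
  have hmod : Nat.choose (3 * i) (i - 1) % 3 =
      (Nat.choose (3 * i % 3) ((i - 1) % 3) * Nat.choose (3 * i / 3) ((i - 1) / 3)) % 3 :=
    lucas3 (3 * i) (i - 1)
  rw [Nat.mul_mod_right, Nat.mul_div_cancel_left _ (by norm_num)] at hmod
  by_cases hr : (i - 1) % 3 = 0
  · -- i = 3j + 1
    set j := (i - 1) / 3 with hj
    have hij : i = 3 * j + 1 := by omega
    rw [hr, Nat.choose_zero_right, one_mul] at hmod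
    have hmod2 : Nat.choose i j % 3 =
        (Nat.choose (i % 3) (j % 3) * Nat.choose (i / 3) (j / 3)) % 3 := lucas3 i j
    have hi3 : i % 3 = 1 := by omega
    have hi4 : i / 3 = j := by omega
    rw [hi3, hi4] at hmod2
    by_cases hjr : j % 3 ≤ 1
    · have h1 : Nat.choose 1 (j % 3) = 1 := by interval_cases h : (j % 3) <;> simp
      rw [h1, one_mul] at hmod2
      have hrec : 3 ∣ Nat.choose j (j / 3) := by
        apply aux10 (n - 1) j
        · omega
        · omega
        · omega
      omega
    · have h0 : Nat.choose 1 (j % 3) = 0 := Nat.choose_eq_zero_of_lt (by omega)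
      rw [h0, zero_mul] at hmod2
      omega
  · have h0 : Nat.choose 0 ((i - 1) % 3) = 0 := Nat.choose_eq_zero_of_lt (by omega)
    rw [h0, zero_mul] at hmod
    omega
end

section
/- Let n ≥ 1 and let i be an integer with (3^n + 1)/2 ≤ i ≤ (5·3^n - 3)/6. Then the binomial coefficient C(3i - (3^n - 1)/2, i - (3^n + 1)/2) is not divisible by 3 if and only if there exist integers j, k with 0 ≤ j ≤ k ≤ n - 1 such that i = (3^n + 1)/2 + (3^j - 1)/2 + (3^k - 1)/2. -/
-- h e = (3^e - 1)/2
def myH : ℕ → ℕ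
  | 0 => 0
  | e + 1 => 3 * myH e + 1

lemma myH_spec (e : ℕ) : 2 * myH e + 1 = 3 ^ e := by
  induction e with
  | zero => rfl
  | succ e ih => simp [myH, pow_succ]; omega

-- the representation predicate
def S (m q r : ℕ) : Prop :=
  match r with
  | 0 => q = 0
  | 1 => ∃ k, k ≤ m ∧ q = myH k
  | _ => ∃ j k, j ≤ k ∧ k ≤ m ∧ q = myH j + myH k

lemma dvd_iff_of_modEq {a b : ℕ} (h : a ≡ b [MOD 3]) : 3 ∣ a ↔ 3 ∣ b := by
  rw [← Nat.modEq_zero_iff_dvd, ← Nat.modEq_zero_iff_dvd]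
  exact ⟨fun H => h.symm.trans H, fun H => h.trans H⟩

lemma lucas_step (n k : ℕ) :
    ¬ 3 ∣ Nat.choose n k ↔ (¬ 3 ∣ Nat.choose (n % 3) (k % 3) ∧ ¬ 3 ∣ Nat.choose (n / 3) (k / 3)) := by
  haveI : Fact (Nat.Prime 3) := ⟨by norm_num⟩
  rw [dvd_iff_of_modEq (Choose.choose_modEq_choose_mod_mul_choose_div_nat (p := 3))]
  rw [Nat.Prime.dvd_mul (by norm_num)]
  tauto

lemma small_choose (r s : ℕ) (hr : r ≤ 2) (hs : s ≤ 2) :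
    ¬ 3 ∣ Nat.choose r s ↔ s ≤ r := by
  interval_cases r <;> interval_cases s <;> decide

lemma S_step (m q' s r : ℕ) (hs : s ≤ 2) (hr : r ≤ 2) :
    (s ≤ r ∧ S m q' s) ↔ S (m + 1) (3 * q' + s) r := by
  have hsucc : ∀ e, myH (e+1) = 3 * myH e + 1 := fun e => rfl
  interval_cases s <;> interval_cases r <;> simp only [S] <;> constructor
  -- s=0, r=0
  · rintro ⟨-, rfl⟩; rfl
  · intro h; exact ⟨le_refl _, by omega⟩
  -- s=0, r=1
  · rintro ⟨-, rfl⟩; exact ⟨0, by omega, rfl⟩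
  · rintro ⟨k, hk, hq⟩
    refine ⟨by omega, ?_⟩
    cases k with
    | zero => simpa [myH] using hq
    | succ k => rw [hsucc] at hq; omega
  -- s=0, r=2
  · rintro ⟨-, rfl⟩; exact ⟨0, 0, le_refl _, by omega, rfl⟩
  · rintro ⟨j, k, hjk, hk, hq⟩
    refine ⟨by omega, ?_⟩
    cases j with
    | zero =>
      cases k with
      | zero => simpa [myH] using hq
      | succ k => rw [hsucc] at hq; rw [show myH 0 = 0 from rfl] at hq; omega
    | succ j =>
      cases k with
      | zero => omega
      | succ k => rw [hsucc, hsucc] at hq; omega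
  -- s=1, r=0
  · omega
  · omega
  -- s=1, r=1
  · rintro ⟨-, k, hk, rfl⟩; exact ⟨k + 1, by omega, (hsucc k).symm⟩
  · rintro ⟨k, hk, hq⟩
    cases k with
    | zero => rw [show myH 0 = 0 from rfl] at hq; omega
    | succ k =>
      rw [hsucc] at hq
      exact ⟨le_refl _, k, by omega, by omega⟩
  -- s=1, r=2
  · rintro ⟨-, k, hk, rfl⟩; exact ⟨0, k + 1, by omega, by omega, by rw [hsucc]; simp [myH]⟩
  · rintro ⟨j, k, hjk, hk, hq⟩
    refine ⟨by omega, ?_⟩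
    cases j with
    | zero =>
      cases k with
      | zero => rw [show myH 0 = 0 from rfl] at hq; omega
      | succ k =>
        rw [hsucc] at hq; simp [myH] at hq
        exact ⟨k, by omega, by omega⟩
    | succ j =>
      cases k with
      | zero => omega
      | succ k => rw [hsucc, hsucc] at hq; omega
  -- s=2, r=0
  · omega
  · omega
  -- s=2, r=1
  · omega
  · rintro ⟨k, hk, hq⟩
    cases k with
    | zero => rw [show myH 0 = 0 from rfl] at hq; omega
    | succ k => rw [hsucc] at hq; omega
  -- s=2, r=2
  · rintro ⟨-, j, k, hjk, hk, rfl⟩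
    exact ⟨j + 1, k + 1, by omega, by omega, by rw [hsucc, hsucc]; ring⟩
  · rintro ⟨j, k, hjk, hk, hq⟩
    refine ⟨le_refl _, ?_⟩
    cases j with
    | zero =>
      cases k with
      | zero => rw [show myH 0 = 0 from rfl] at hq; omega
      | succ k => rw [hsucc] at hq; rw [show myH 0 = 0 from rfl] at hq; omega
    | succ j =>
      cases k with
      | zero => omega
      | succ k =>
        rw [hsucc, hsucc] at hq
        exact ⟨j, k, by omega, by omega, by omega⟩

lemma key (m : ℕ) : ∀ q r, r ≤ 2 → q < 3 ^ m →
    (¬ 3 ∣ Nat.choose (3 ^ m + 3 * q + r) q ↔ S m q r) := by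
  induction m with
  | zero =>
    intro q r hr hq
    have : q = 0 := by omega
    subst this
    simp only [Nat.choose_zero_right]
    constructor
    · intro _
      interval_cases r <;> first
        | rfl
        | exact ⟨0, le_refl _, rfl⟩
        | exact ⟨0, 0, le_refl _, le_refl _, rfl⟩
    · intro _; omega
  | succ m ih =>
    intro q r hr hq
    rw [lucas_step]
    have h1 : (3 ^ (m + 1) + 3 * q + r) % 3 = r := by
      have : 3 ^ (m+1) = 3 * 3 ^ m := by ring
      omega
    have h2 : (3 ^ (m + 1) + 3 * q + r) / 3 = 3 ^ m + q := by
      have : 3 ^ (m+1) = 3 * 3 ^ m := by ring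
      omega
    rw [h1, h2]
    have hqd : 3 ^ m + q = 3 ^ m + 3 * (q / 3) + q % 3 := by omega
    rw [hqd, small_choose r (q % 3) hr (by omega),
      ih (q / 3) (q % 3) (by omega) (by omega)]
    rw [and_comm] at *
    have := S_step m (q / 3) (q % 3) r (by omega) hr
    rw [and_comm] at this
    rw [this]
    congr! 2
    omega

theorem stmt_11 (n : ℕ) (hn : 1 ≤ n) (i : ℕ)
    (hi1 : (3 ^ n + 1) / 2 ≤ i) (hi2 : i ≤ (5 * 3 ^ n - 3) / 6) :
    ¬ (3 ∣ Nat.choose (3 * i - (3 ^ n - 1) / 2) (i - (3 ^ n + 1) / 2)) ↔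
      ∃ j k : ℕ, j ≤ k ∧ k ≤ n - 1 ∧
        i = (3 ^ n + 1) / 2 + (3 ^ j - 1) / 2 + (3 ^ k - 1) / 2 := by
  obtain ⟨m, rfl⟩ : ∃ m, n = m + 1 := ⟨n - 1, by omega⟩
  have hM : 2 * myH m + 1 = 3 ^ m := myH_spec m
  have h3 : (3:ℕ) ^ (m + 1) = 3 * 3 ^ m := by ring
  set A := myH m with hA
  have e1 : (3 ^ (m + 1) + 1) / 2 = 3 * A + 2 := by omega
  have e2 : (3 ^ (m + 1) - 1) / 2 = 3 * A + 1 := by omega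
  have e3 : (5 * 3 ^ (m + 1) - 3) / 6 = 5 * A + 2 := by omega
  rw [e1] at hi1
  rw [e3] at hi2
  rw [e1, e2]
  set t := i - (3 * A + 2) with ht
  have hi : i = 3 * A + 2 + t := by omega
  have htb : t ≤ 2 * A := by omega
  have upper : 3 * i - (3 * A + 1) = 3 ^ (m + 1) + 3 * t + 2 := by omega
  rw [upper]
  rw [key (m + 1) t 2 (by omega) (by omega)]
  simp only [S, Nat.add_sub_cancel]
  constructor
  · rintro ⟨j, k, hjk, hk, hq⟩
    have hk' : k ≤ m := by
      rcases Nat.lt_or_ge k (m + 1) with h | h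
      · omega
      · exfalso
        have : k = m + 1 := by omega
        subst this
        have : myH (m + 1) = 3 * A + 1 := by simp [myH, hA]
        omega
    refine ⟨j, k, hjk, hk', ?_⟩
    have sj := myH_spec j
    have sk := myH_spec k
    have : (3 ^ j - 1) / 2 = myH j := by omega
    have : (3 ^ k - 1) / 2 = myH k := by omega
    omega
  · rintro ⟨j, k, hjk, hk, hq⟩
    refine ⟨j, k, hjk, by omega, ?_⟩
    have sj := myH_spec j
    have sk := myH_spec k
    have : (3 ^ j - 1) / 2 = myH j := by omega
    have : (3 ^ k - 1) / 2 = myH k := by omega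
    omega
end

section
/- Let n ≥ 1 and let i = (3^n + 1)/2 + (3^j - 1)/2 + (3^k - 1)/2 where 0 ≤ j ≤ k ≤ n - 1. Then C(3i - (3^n - 1)/2, i - (3^n + 1)/2) ≡ 1 (mod 3) if j = k, and C(3i - (3^n - 1)/2, i - (3^n + 1)/2) ≡ 2 (mod 3) if j < k. -/
private lemma lucas3_s12 (n k : ℕ) :
    Nat.choose n k % 3 = (Nat.choose (n % 3) (k % 3) * Nat.choose (n / 3) (k / 3)) % 3 := by
  have : Fact (Nat.Prime 3) := ⟨by norm_num⟩
  exact Choose.choose_modEq_choose_mod_mul_choose_div_nat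

private def f3 (m : ℕ) : ℕ := (3 ^ m - 1) / 2

private lemma f3_zero : f3 0 = 0 := rfl

private lemma f3_succ (m : ℕ) : f3 (m + 1) = 3 * f3 m + 1 := by
  have h1 : 1 ≤ 3 ^ m := Nat.one_le_pow _ _ (by norm_num)
  have h2 : (3 ^ m - 1) % 2 = 0 := by
    have : 3 ^ m % 2 = 1 := by
      rw [Nat.pow_mod]; simp
    omega
  have h2' : (3 ^ (m + 1) - 1) % 2 = 0 := by
    have : 3 ^ (m + 1) % 2 = 1 := by
      rw [Nat.pow_mod]; simp
    omega
  have h3 : 3 ^ (m + 1) = 3 * 3 ^ m := by ring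
  unfold f3
  omega

-- Lemma A : j = k case: C(3^n + 2 f(k+1), 2 f k) % 3 = 1, for k < n
private lemma lemA : ∀ k n, k < n →
    Nat.choose (3 ^ n + 2 * f3 (k + 1)) (2 * f3 k) % 3 = 1 := by
  intro k
  induction k with
  | zero => intro n hn; simp [f3_zero, f3_succ]
  | succ k ih =>
    intro n hn
    obtain ⟨m, rfl⟩ : ∃ m, n = m + 1 := ⟨n - 1, by omega⟩
    have hN : 3 ^ (m + 1) + 2 * f3 (k + 2) = 3 * (3 ^ m + 2 * f3 (k + 1)) + 2 := by
      rw [f3_succ (k+1)]; ring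
    have hM : 2 * f3 (k + 1) = 3 * (2 * f3 k) + 2 := by
      rw [f3_succ k]; ring
    rw [lucas3_s12]
    have e1 : (3 ^ (m + 1) + 2 * f3 (k + 2)) % 3 = 2 := by omega
    have e2 : (3 ^ (m + 1) + 2 * f3 (k + 2)) / 3 = 3 ^ m + 2 * f3 (k + 1) := by omega
    have e3 : (2 * f3 (k + 1)) % 3 = 2 := by omega
    have e4 : (2 * f3 (k + 1)) / 3 = 2 * f3 k := by omega
    rw [e1, e2, e3, e4]
    have := ih m (by omega)
    simp [Nat.mul_mod, this]

-- Lemma C : C(3^m + f(l+1), f l) % 3 = 1 for l < m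
private lemma lemC : ∀ l m, l < m →
    Nat.choose (3 ^ m + f3 (l + 1)) (f3 l) % 3 = 1 := by
  intro l
  induction l with
  | zero => intro m hm; simp [f3_zero]
  | succ l ih =>
    intro m hm
    obtain ⟨m', rfl⟩ : ∃ m', m = m' + 1 := ⟨m - 1, by omega⟩
    have hN : 3 ^ (m' + 1) + f3 (l + 2) = 3 * (3 ^ m' + f3 (l + 1)) + 1 := by
      rw [f3_succ (l+1)]; ring
    have hM : f3 (l + 1) = 3 * f3 l + 1 := f3_succ l
    rw [lucas3_s12]
    have e1 : (3 ^ (m' + 1) + f3 (l + 2)) % 3 = 1 := by omega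
    have e2 : (3 ^ (m' + 1) + f3 (l + 2)) / 3 = 3 ^ m' + f3 (l + 1) := by omega
    have e3 : (f3 (l + 1)) % 3 = 1 := by omega
    have e4 : (f3 (l + 1)) / 3 = f3 l := by omega
    rw [e1, e2, e3, e4]
    have := ih m' (by omega)
    simp [Nat.mul_mod, this]

-- Lemma B : j < k case
private lemma lemB : ∀ j n k, j < k → k < n →
    Nat.choose (3 ^ n + f3 (j + 1) + f3 (k + 1)) (f3 j + f3 k) % 3 = 2 := by
  intro j
  induction j with
  | zero =>
    intro n k hjk hk
    obtain ⟨k', rfl⟩ : ∃ k', k = k' + 1 := ⟨k - 1, by omega⟩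
    obtain ⟨m, rfl⟩ : ∃ m, n = m + 1 := ⟨n - 1, by omega⟩
    have hf1 : f3 (0 + 1) = 1 := rfl
    have hf2 : f3 (k' + 2) = 3 * f3 (k' + 1) + 1 := f3_succ (k' + 1)
    have hp : (3:ℕ) ^ (m + 1) = 3 * 3 ^ m := by ring
    have hN : 3 ^ (m + 1) + f3 (0 + 1) + f3 (k' + 2) = 3 * (3 ^ m + f3 (k' + 1)) + 2 := by
      have := f3_succ (k' + 1); omega
    have hM : f3 0 + f3 (k' + 1) = 3 * f3 k' + 1 := by
      have := f3_succ k'; have := f3_zero; omega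
    rw [lucas3_s12]
    have e1 : (3 ^ (m + 1) + f3 (0 + 1) + f3 (k' + 2)) % 3 = 2 := by omega
    have e2 : (3 ^ (m + 1) + f3 (0 + 1) + f3 (k' + 2)) / 3 = 3 ^ m + f3 (k' + 1) := by omega
    have e3 : (f3 0 + f3 (k' + 1)) % 3 = 1 := by omega
    have e4 : (f3 0 + f3 (k' + 1)) / 3 = f3 k' := by omega
    rw [e1, e2, e3, e4]
    have := lemC k' m (by omega)
    simp [Nat.mul_mod, this]
  | succ j ih =>
    intro n k hjk hk
    obtain ⟨k', rfl⟩ : ∃ k', k = k' + 1 := ⟨k - 1, by omega⟩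
    obtain ⟨m, rfl⟩ : ∃ m, n = m + 1 := ⟨n - 1, by omega⟩
    have hN : 3 ^ (m + 1) + f3 (j + 2) + f3 (k' + 2)
        = 3 * (3 ^ m + f3 (j + 1) + f3 (k' + 1)) + 2 := by
      rw [f3_succ (j+1), f3_succ (k'+1)]; ring
    have hM : f3 (j + 1) + f3 (k' + 1) = 3 * (f3 j + f3 k') + 2 := by
      rw [f3_succ j, f3_succ k']; ring
    rw [lucas3_s12]
    have e1 : (3 ^ (m + 1) + f3 (j + 2) + f3 (k' + 2)) % 3 = 2 := by omega
    have e2 : (3 ^ (m + 1) + f3 (j + 2) + f3 (k' + 2)) / 3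
        = 3 ^ m + f3 (j + 1) + f3 (k' + 1) := by omega
    have e3 : (f3 (j + 1) + f3 (k' + 1)) % 3 = 2 := by omega
    have e4 : (f3 (j + 1) + f3 (k' + 1)) / 3 = f3 j + f3 k' := by omega
    rw [e1, e2, e3, e4]
    have := ih m k' (by omega) (by omega)
    simp [Nat.mul_mod, this]

theorem stmt_12 (n : ℕ) (hn : 1 ≤ n) (j k : ℕ) (hjk : j ≤ k) (hk : k ≤ n - 1)
    (i : ℕ) (hi : i = (3 ^ n + 1) / 2 + (3 ^ j - 1) / 2 + (3 ^ k - 1) / 2) :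
    (j = k → Nat.choose (3 * i - (3 ^ n - 1) / 2) (i - (3 ^ n + 1) / 2) % 3 = 1) ∧
    (j < k → Nat.choose (3 * i - (3 ^ n - 1) / 2) (i - (3 ^ n + 1) / 2) % 3 = 2) := by
  have h3n : 3 ^ n % 2 = 1 := by rw [Nat.pow_mod]; simp
  have h1 : 1 ≤ 3 ^ n := Nat.one_le_pow _ _ (by norm_num)
  have ha : 2 * ((3 ^ n + 1) / 2) = 3 ^ n + 1 := by omega
  have hb : 2 * ((3 ^ n - 1) / 2) = 3 ^ n - 1 := by omega
  have hfj : (3 ^ j - 1) / 2 = f3 j := rfl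
  have hfk : (3 ^ k - 1) / 2 = f3 k := rfl
  rw [hfj, hfk] at hi
  have hsub : i - (3 ^ n + 1) / 2 = f3 j + f3 k := by omega
  have htop : 3 * i - (3 ^ n - 1) / 2 = 3 ^ n + f3 (j + 1) + f3 (k + 1) := by
    rw [f3_succ j, f3_succ k]; omega
  rw [hsub, htop]
  constructor
  · rintro rfl
    have : f3 j + f3 j = 2 * f3 j := by ring
    rw [this, show (3:ℕ) ^ n + f3 (j+1) + f3 (j+1) = 3 ^ n + 2 * f3 (j+1) by ring]
    exact lemA j n (by omega)
  · intro h
    exact lemB j n k h (by omega)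
end

section
/- Let n ≥ 1 and let i = (3^n + 1)/2 + (3^j - 1)/2 + (3^k - 1)/2 where 0 ≤ j ≤ k ≤ n - 1. Then (-1)^(i - (3^n+1)/2) · C(3i - (3^n - 1)/2, i - (3^n + 1)/2) ≡ 1 (mod 3) if j = k, and (-1)^(i - (3^n+1)/2) · C(3i - (3^n - 1)/2, i - (3^n + 1)/2) ≡ (-1)^(j+k+1) (mod 3) if j < k. -/
private def bb (t : ℕ) : ℕ := (3 ^ t - 1) / 2

private lemma bb_spec (t : ℕ) : 2 * bb t + 1 = 3 ^ t := by
  induction t with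
  | zero => simp [bb]
  | succ t ih => simp only [bb, pow_succ] at *; omega

private lemma bb_succ (t : ℕ) : bb (t + 1) = 3 * bb t + 1 := by
  have h1 := bb_spec t
  have h2 := bb_spec (t + 1)
  rw [pow_succ] at h2
  omega

private lemma bb_zero : bb 0 = 0 := rfl

private lemma bb_parity (t : ℕ) : bb t % 2 = t % 2 := by
  induction t with
  | zero => simp [bb]
  | succ t ih => rw [bb_succ]; omega

private lemma lucas3_s13 (a b r s : ℕ) (hr : r < 3) (hs : s < 3) :
    ((3 * a + r).choose (3 * b + s) : ZMod 3) =
      ((a.choose b : ZMod 3)) * ((r.choose s : ZMod 3)) := by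
  haveI : Fact (Nat.Prime 3) := ⟨by norm_num⟩
  have h := @Choose.choose_modEq_choose_mod_mul_choose_div (3 * a + r) (3 * b + s) 3 _
  have h2 := (ZMod.intCast_eq_intCast_iff _ _ _).mpr h
  rw [Nat.mul_add_mod, Nat.mul_add_div (by norm_num), Nat.mul_add_mod,
    Nat.mul_add_div (by norm_num), Nat.mod_eq_of_lt hr, Nat.mod_eq_of_lt hs,
    Nat.div_eq_of_lt hr, Nat.div_eq_of_lt hs] at h2
  push_cast at h2
  rw [h2]; push_cast; ring

private lemma zmod3_to_int (a : ℕ) (z : ℤ) (h : ((a : ℤ) : ZMod 3) = (z : ZMod 3)) :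
    (a : ℤ) ≡ z [ZMOD 3] := by
  have := (ZMod.intCast_eq_intCast_iff (a : ℤ) z 3).mp h
  exact_mod_cast this

private lemma lemG : ∀ (c m : ℕ), c ≤ m →
    ((3 ^ m + bb (c + 1)).choose (bb c) : ZMod 3) = 1 := by
  intro c
  induction c with
  | zero => intro m _; simp [bb]
  | succ c ih =>
    intro m hm
    obtain ⟨m', rfl⟩ : ∃ m', m = m' + 1 := ⟨m - 1, by omega⟩
    have key : 3 ^ (m' + 1) + bb (c + 2) = 3 * (3 ^ m' + bb (c + 1)) + 1 := by
      rw [bb_succ (c + 1), pow_succ]; ring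
    have key2 : bb (c + 1) = 3 * bb c + 1 := bb_succ c
    rw [key]
    set A := 3 ^ m' + bb (c + 1) with hA
    rw [key2, lucas3_s13 _ _ _ _ (by norm_num) (by norm_num), hA, ih m' (by omega)]
    norm_num

private lemma lemL : ∀ (j k n : ℕ), j ≤ k → k + 1 ≤ n →
    ((3 ^ n + 3 * (bb j + bb k) + 2).choose (bb j + bb k) : ZMod 3) =
      if j = k then 1 else -1 := by
  intro j
  induction j with
  | zero =>
    intro k n _ hkn
    cases k with
    | zero => simp [bb]
    | succ c =>
      obtain ⟨m', rfl⟩ : ∃ m', n = m' + 1 := ⟨n - 1, by omega⟩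
      have key : 3 ^ (m' + 1) + 3 * (bb 0 + bb (c + 1)) + 2 =
          3 * (3 ^ m' + bb (c + 1)) + 2 := by
        rw [bb_zero, bb_succ c, pow_succ]; ring
      have key2 : bb 0 + bb (c + 1) = 3 * bb c + 1 := by
        rw [bb_zero, bb_succ c, zero_add]
      rw [key, key2, lucas3_s13 _ _ _ _ (by norm_num) (by norm_num),
        lemG c m' (by omega)]
      rw [if_neg (by omega)]
      decide
  | succ j ih =>
    intro k n hjk hkn
    obtain ⟨c, rfl⟩ : ∃ c, k = c + 1 := ⟨k - 1, by omega⟩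
    obtain ⟨m', rfl⟩ : ∃ m', n = m' + 1 := ⟨n - 1, by omega⟩
    have key : 3 ^ (m' + 1) + 3 * (bb (j + 1) + bb (c + 1)) + 2 =
        3 * (3 ^ m' + 3 * (bb j + bb c) + 2) + 2 := by
      rw [bb_succ j, bb_succ c, pow_succ]; ring
    have key2 : bb (j + 1) + bb (c + 1) = 3 * (bb j + bb c) + 2 := by
      rw [bb_succ j, bb_succ c]; ring
    rw [key, key2, lucas3_s13 _ _ _ _ (by norm_num) (by norm_num),
      ih c m' (by omega) (by omega)]
    by_cases h : j = c
    · rw [if_pos h, if_pos (by omega)]; norm_num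
    · rw [if_neg h, if_neg (by omega)]; norm_num

theorem stmt_13 (n : ℕ) (hn : 1 ≤ n) (j k : ℕ) (hjk : j ≤ k) (hk : k ≤ n - 1)
    (i : ℕ) (hi : i = (3 ^ n + 1) / 2 + (3 ^ j - 1) / 2 + (3 ^ k - 1) / 2) :
    (j = k → (-1 : ℤ) ^ (i - (3 ^ n + 1) / 2) *
      (Nat.choose (3 * i - (3 ^ n - 1) / 2) (i - (3 ^ n + 1) / 2) : ℤ) ≡ 1 [ZMOD 3]) ∧
    (j < k → (-1 : ℤ) ^ (i - (3 ^ n + 1) / 2) *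
      (Nat.choose (3 * i - (3 ^ n - 1) / 2) (i - (3 ^ n + 1) / 2) : ℤ) ≡
        (-1 : ℤ) ^ (j + k + 1) [ZMOD 3]) := by
  have hbn := bb_spec n
  have hbj := bb_spec j
  have hbk := bb_spec k
  have e1 : (3 ^ n + 1) / 2 = bb n + 1 := by omega
  have e2 : (3 ^ j - 1) / 2 = bb j := rfl
  have e3 : (3 ^ k - 1) / 2 = bb k := rfl
  have e4 : (3 ^ n - 1) / 2 = bb n := rfl
  have hm : i - (3 ^ n + 1) / 2 = bb j + bb k := by omega
  have htop : 3 * i - (3 ^ n - 1) / 2 = 3 ^ n + 3 * (bb j + bb k) + 2 := by omega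
  rw [hm, htop]
  have hL := lemL j k n hjk (by omega)
  have hsign : ((-1 : ℤ)) ^ (bb j + bb k) = (-1 : ℤ) ^ (j + k) := by
    have h1 := bb_parity j
    have h2 := bb_parity k
    rw [neg_one_pow_eq_pow_mod_two, neg_one_pow_eq_pow_mod_two (n := j + k)]
    congr 1
    omega
  constructor
  · intro hjk'
    subst hjk'
    rw [if_pos rfl] at hL
    have hchoose : ((3 ^ n + 3 * (bb j + bb j) + 2).choose (bb j + bb j) : ℤ) ≡
        1 [ZMOD 3] := by
      apply zmod3_to_int
      push_cast
      rw [hL]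
    calc (-1 : ℤ) ^ (bb j + bb j) *
        ((3 ^ n + 3 * (bb j + bb j) + 2).choose (bb j + bb j) : ℤ)
        ≡ (-1 : ℤ) ^ (bb j + bb j) * 1 [ZMOD 3] := Int.ModEq.mul_left _ hchoose
      _ = 1 := by rw [mul_one]; exact Even.neg_one_pow ⟨bb j, rfl⟩
  · intro hlt
    rw [if_neg (by omega)] at hL
    have hchoose : ((3 ^ n + 3 * (bb j + bb k) + 2).choose (bb j + bb k) : ℤ) ≡
        (-1) [ZMOD 3] := by
      apply zmod3_to_int
      push_cast
      rw [hL]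
    calc (-1 : ℤ) ^ (bb j + bb k) *
        ((3 ^ n + 3 * (bb j + bb k) + 2).choose (bb j + bb k) : ℤ)
        ≡ (-1 : ℤ) ^ (bb j + bb k) * (-1) [ZMOD 3] := Int.ModEq.mul_left _ hchoose
      _ = (-1 : ℤ) ^ (j + k + 1) := by rw [hsign, pow_succ]
end

section
/- Let n ≥ 1, q = 3^n, let C_0 be the nonzero squares of F_q and C_1 the nonsquares, and let α, β, γ, θ ∈ F_q^*. Define f : F_q → F_q by f(0) = 0, f(x) = α(x^3 + γx^2 + γ^2 x) for x ∈ C_0, and f(x) = β(x^3 + θx^2 + θ^2 x) for x ∈ C_1. Then f is a bijection of F_q if and only if: γ is a nonsquare in F_q, θ is a nonzero square in F_q, and (α is a nonzero square ↔ β is a nonzero square). -/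
/-!
In characteristic 3 the cubic factors as `x ^ 3 + c x ^ 2 + c ^ 2 x = x (x - c) ^ 2`, which for
`x ≠ 0, c` lies in the square class of `x`. So `f γ = 0` if `γ` is a square and `f θ = 0` if
`θ` is a nonsquare; otherwise `f` maps `C₀` into `α C₀` and `C₁` into `β C₁`. Surjectivity needs
these two classes to differ, i.e. `η(α) = η(β)`, and then it remains to see that `f` is injective
on each class. A collision `a ≠ b` of `x (x - c) ^ 2` gives `(c - a - b) ^ 2 = a b = w ^ 2` by the
identity `a (a - c) ^ 2 - b (b - c) ^ 2 = (a - b) ((c - a - b) ^ 2 - a b)`, and then in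
characteristic 3 `a c = (a ∓ w) ^ 2`, so `c` would lie in the class of `a`.
-/

open Function

section CharThree

variable {R : Type*} [CommRing R] [CharP R 3]

theorem cubic_eq_mul_sub_sq (c x : R) : x ^ 3 + c * x ^ 2 + c ^ 2 * x = x * (x - c) ^ 2 := by
  linear_combination (c * x ^ 2) * CharP.ofNat_eq_zero R 3

theorem isSquare_mul_of_sq_sub_sub_eq_mul [IsDomain R] {a b c : R} (h : (c - a - b) ^ 2 = a * b)
    (hab : IsSquare (a * b)) : IsSquare (a * c) := by
  have h3 : (3 : R) = 0 := CharP.ofNat_eq_zero R 3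
  obtain ⟨w, hw⟩ := hab
  rcases sq_eq_sq_iff_eq_or_eq_neg.1 (h.trans (hw.trans (sq w).symm)) with hc | hc
  · exact ⟨a - w, by linear_combination a * hc + hw + (a * w) * h3⟩
  · exact ⟨a + w, by linear_combination a * hc + hw - (a * w) * h3⟩

end CharThree

theorem mul_sub_sq_sub_mul_sub_sq {R : Type*} [CommRing R] (a b c : R) :
    a * (a - c) ^ 2 - b * (b - c) ^ 2 = (a - b) * ((c - a - b) ^ 2 - a * b) := by
  ring

theorem sub_ne_zero_of_not_isSquare_iff {R : Type*} [Ring R] {x c : R}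
    (h : ¬(IsSquare x ↔ IsSquare c)) : x - c ≠ 0 :=
  sub_ne_zero.2 fun hxc => h (hxc ▸ Iff.rfl)

section Field

variable {F : Type*} [Field F] {a b c k x α β γ θ : F}

theorem mul_mul_sub_sq_ne_zero (hk : k ≠ 0) (hx : x ≠ 0) (hxc : ¬(IsSquare x ↔ IsSquare c)) :
    k * (x * (x - c) ^ 2) ≠ 0 :=
  mul_ne_zero hk (mul_ne_zero hx (pow_ne_zero 2 (sub_ne_zero_of_not_isSquare_iff hxc)))

open scoped Classical in
noncomputable def cubicPiecewise (α β γ θ x : F) : F :=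
  if IsSquare x then α * (x * (x - γ) ^ 2) else β * (x * (x - θ) ^ 2)

theorem cubicPiecewise_of_isSquare (hx : IsSquare x) :
    cubicPiecewise α β γ θ x = α * (x * (x - γ) ^ 2) := by
  rw [cubicPiecewise, if_pos hx]

theorem cubicPiecewise_of_not_isSquare (hx : ¬IsSquare x) :
    cubicPiecewise α β γ θ x = β * (x * (x - θ) ^ 2) := by
  rw [cubicPiecewise, if_neg hx]

theorem cubicPiecewise_zero : cubicPiecewise α β γ θ 0 = 0 := by
  rw [cubicPiecewise_of_isSquare IsSquare.zero, zero_mul, mul_zero]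

theorem not_isSquare_of_injective_cubicPiecewise (hf : Injective (cubicPiecewise α β γ θ))
    (hγ : γ ≠ 0) : ¬IsSquare γ := fun hs =>
  hγ <| hf <| by rw [cubicPiecewise_of_isSquare hs, sub_self, cubicPiecewise_zero]; ring

theorem isSquare_of_injective_cubicPiecewise (hf : Injective (cubicPiecewise α β γ θ))
    (hθ : θ ≠ 0) : IsSquare θ := by_contra fun hs =>
  hθ <| hf <| by rw [cubicPiecewise_of_not_isSquare hs, sub_self, cubicPiecewise_zero]; ring

theorem cubicPiecewise_eq_zero_iff (hα : α ≠ 0) (hβ : β ≠ 0) (hγs : ¬IsSquare γ)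
    (hθs : IsSquare θ) : cubicPiecewise α β γ θ x = 0 ↔ x = 0 := by
  refine ⟨fun h => by_contra fun hx => ?_, by rintro rfl; exact cubicPiecewise_zero⟩
  by_cases hs : IsSquare x
  · exact mul_mul_sub_sq_ne_zero hα hx (by tauto) (cubicPiecewise_of_isSquare hs ▸ h)
  · exact mul_mul_sub_sq_ne_zero hβ hx (by tauto) (cubicPiecewise_of_not_isSquare hs ▸ h)

variable [Fintype F]

theorem isSquare_mul_iff_of_ne_zero {a b : F} (ha : a ≠ 0) (hb : b ≠ 0) :
    IsSquare (a * b) ↔ (IsSquare a ↔ IsSquare b) := by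
  classical
  rw [← quadraticChar_one_iff_isSquare (mul_ne_zero ha hb), ← quadraticChar_one_iff_isSquare ha,
    ← quadraticChar_one_iff_isSquare hb, map_mul]
  rcases quadraticChar_dichotomy ha with h | h <;>
    rcases quadraticChar_dichotomy hb with h' | h' <;> simp [h, h']

theorem not_surjective_of_forall_isSquare_iff (hF : ringChar F ≠ 2) {f : F → F} (p : Prop)
    (h : ∀ x, f x ≠ 0 → (IsSquare (f x) ↔ p)) : ¬Surjective f := by
  intro hf
  obtain ⟨d, hd⟩ := FiniteField.exists_nonsquare hF
  obtain ⟨x, rfl⟩ := hf d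
  obtain ⟨y, hy⟩ := hf 1
  have hy' := h y (hy ▸ one_ne_zero)
  rw [hy] at hy'
  exact hd ((h x fun h0 => hd (h0 ▸ IsSquare.zero)).2 (hy'.1 IsSquare.one))

theorem isSquare_mul_mul_sub_sq_iff (hk : k ≠ 0) (hx : x ≠ 0)
    (hxc : ¬(IsSquare x ↔ IsSquare c)) :
    IsSquare (k * (x * (x - c) ^ 2)) ↔ (IsSquare k ↔ IsSquare x) := by
  have hsq : (x - c) ^ 2 ≠ 0 := pow_ne_zero 2 (sub_ne_zero_of_not_isSquare_iff hxc)
  rw [isSquare_mul_iff_of_ne_zero hk (mul_ne_zero hx hsq), isSquare_mul_iff_of_ne_zero hx hsq,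
    iff_true_right (IsSquare.sq _)]

theorem eq_of_mul_sub_sq_eq [CharP F 3] (ha : a ≠ 0) (hb : b ≠ 0) (hc : c ≠ 0)
    (hab : IsSquare a ↔ IsSquare b) (hac : ¬(IsSquare a ↔ IsSquare c))
    (h : a * (a - c) ^ 2 = b * (b - c) ^ 2) : a = b := by
  by_contra hne
  have hsq : (c - a - b) ^ 2 = a * b := by
    have key := mul_sub_sq_sub_mul_sub_sq a b c
    rw [h, sub_self, eq_comm, mul_eq_zero, sub_eq_zero, sub_eq_zero] at key
    exact key.resolve_left hne
  exact hac <| (isSquare_mul_iff_of_ne_zero ha hc).1 <|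
    isSquare_mul_of_sq_sub_sub_eq_mul hsq ((isSquare_mul_iff_of_ne_zero ha hb).2 hab)

theorem isSquare_cubicPiecewise_of_isSquare (hα : α ≠ 0) (hγs : ¬IsSquare γ) (hx : x ≠ 0)
    (hs : IsSquare x) : IsSquare (cubicPiecewise α β γ θ x) ↔ IsSquare α := by
  rw [cubicPiecewise_of_isSquare hs, isSquare_mul_mul_sub_sq_iff hα hx (by tauto)]
  tauto

theorem isSquare_cubicPiecewise_of_not_isSquare (hβ : β ≠ 0) (hθs : IsSquare θ) (hx : x ≠ 0)
    (hs : ¬IsSquare x) : IsSquare (cubicPiecewise α β γ θ x) ↔ ¬IsSquare β := by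
  rw [cubicPiecewise_of_not_isSquare hs, isSquare_mul_mul_sub_sq_iff hβ hx (by tauto)]
  tauto

theorem not_surjective_cubicPiecewise [CharP F 3] (hα : α ≠ 0) (hβ : β ≠ 0)
    (hγs : ¬IsSquare γ) (hθs : IsSquare θ) (hαβ : ¬(IsSquare α ↔ IsSquare β)) :
    ¬Surjective (cubicPiecewise α β γ θ) := by
  refine not_surjective_of_forall_isSquare_iff (by rw [ringChar.eq F 3]; decide) (IsSquare α)
    fun x hgx => ?_
  have hx : x ≠ 0 := by rintro rfl; exact hgx cubicPiecewise_zero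
  by_cases hs : IsSquare x
  · exact isSquare_cubicPiecewise_of_isSquare hα hγs hx hs
  · rw [isSquare_cubicPiecewise_of_not_isSquare hβ hθs hx hs]
    tauto

theorem injective_cubicPiecewise [CharP F 3] (hα : α ≠ 0) (hβ : β ≠ 0) (hγ : γ ≠ 0)
    (hθ : θ ≠ 0) (hγs : ¬IsSquare γ) (hθs : IsSquare θ) (hαβ : IsSquare α ↔ IsSquare β) :
    Injective (cubicPiecewise α β γ θ) := by
  have hclass : ∀ {x}, x ≠ 0 →
      (IsSquare (cubicPiecewise α β γ θ x) ↔ (IsSquare x ↔ IsSquare α)) := by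
    intro x hx
    by_cases hs : IsSquare x
    · rw [isSquare_cubicPiecewise_of_isSquare hα hγs hx hs]
      tauto
    · rw [isSquare_cubicPiecewise_of_not_isSquare hβ hθs hx hs]
      tauto
  intro x y hxy
  rcases eq_or_ne x 0 with rfl | hx
  · rwa [cubicPiecewise_zero, eq_comm, cubicPiecewise_eq_zero_iff hα hβ hγs hθs, eq_comm]
      at hxy
  rcases eq_or_ne y 0 with rfl | hy
  · rwa [cubicPiecewise_zero, cubicPiecewise_eq_zero_iff hα hβ hγs hθs] at hxy
  have hxy' : IsSquare x ↔ IsSquare y := by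
    have := hclass hx
    rw [hxy, hclass hy] at this
    tauto
  by_cases hs : IsSquare x
  · rw [cubicPiecewise_of_isSquare hs, cubicPiecewise_of_isSquare (hxy'.1 hs)] at hxy
    exact eq_of_mul_sub_sq_eq hx hy hγ hxy' (by tauto) (mul_left_cancel₀ hα hxy)
  · rw [cubicPiecewise_of_not_isSquare hs, cubicPiecewise_of_not_isSquare (hs ∘ hxy'.2)] at hxy
    exact eq_of_mul_sub_sq_eq hx hy hθ hxy' (by tauto) (mul_left_cancel₀ hβ hxy)

theorem bijective_cubicPiecewise_iff [CharP F 3] (hα : α ≠ 0) (hβ : β ≠ 0) (hγ : γ ≠ 0)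
    (hθ : θ ≠ 0) :
    Bijective (cubicPiecewise α β γ θ) ↔
      ¬IsSquare γ ∧ IsSquare θ ∧ (IsSquare α ↔ IsSquare β) := by
  constructor
  · intro hf
    have hγs := not_isSquare_of_injective_cubicPiecewise hf.1 hγ
    have hθs := isSquare_of_injective_cubicPiecewise hf.1 hθ
    refine ⟨hγs, hθs, by_contra fun hαβ => ?_⟩
    exact not_surjective_cubicPiecewise hα hβ hγs hθs hαβ hf.2
  · rintro ⟨hγs, hθs, hαβ⟩
    exact (injective_cubicPiecewise hα hβ hγ hθ hγs hθs hαβ).bijective_of_finite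

end Field

theorem stmt_15_general {F : Type*} [Field F] [Fintype F] (n : ℕ)
    (hcard : Fintype.card F = 3 ^ n)
    (α β γ θ : F) (hα : α ≠ 0) (hβ : β ≠ 0) (hγ : γ ≠ 0) (hθ : θ ≠ 0)
    (f : F → F)
    (hf0 : f 0 = 0)
    (hfs : ∀ x : F, x ≠ 0 → IsSquare x → f x = α * (x ^ 3 + γ * x ^ 2 + γ ^ 2 * x))
    (hfn : ∀ x : F, x ≠ 0 → ¬ IsSquare x → f x = β * (x ^ 3 + θ * x ^ 2 + θ ^ 2 * x)) :
    Function.Bijective f ↔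
      (¬ IsSquare γ ∧ IsSquare θ ∧ (IsSquare α ↔ IsSquare β)) := by
  have : CharP F 3 := charP_of_card_eq_prime_pow hcard
  suffices f = cubicPiecewise α β γ θ from this ▸ bijective_cubicPiecewise_iff hα hβ hγ hθ
  funext x
  rcases eq_or_ne x 0 with rfl | hx
  · rw [hf0, cubicPiecewise_zero]
  by_cases hs : IsSquare x
  · rw [hfs x hx hs, cubicPiecewise_of_isSquare hs, cubic_eq_mul_sub_sq]
  · rw [hfn x hx hs, cubicPiecewise_of_not_isSquare hs, cubic_eq_mul_sub_sq]

theorem stmt_15 {F : Type*} [Field F] [Fintype F] (n : ℕ) (hn : 1 ≤ n)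
    (hcard : Fintype.card F = 3 ^ n)
    (α β γ θ : F) (hα : α ≠ 0) (hβ : β ≠ 0) (hγ : γ ≠ 0) (hθ : θ ≠ 0)
    (f : F → F)
    (hf0 : f 0 = 0)
    (hfs : ∀ x : F, x ≠ 0 → IsSquare x → f x = α * (x ^ 3 + γ * x ^ 2 + γ ^ 2 * x))
    (hfn : ∀ x : F, x ≠ 0 → ¬ IsSquare x → f x = β * (x ^ 3 + θ * x ^ 2 + θ ^ 2 * x)) :
    Function.Bijective f ↔
      (¬ IsSquare γ ∧ IsSquare θ ∧ (IsSquare α ↔ IsSquare β)) :=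
  stmt_15_general n hcard α β γ θ hα hβ hγ hθ f hf0 hfs hfn
end

section
/- Let n ≥ 1, q = 3^n, C_0 the nonzero squares of F_q, C_1 the nonsquares, t a positive integer with gcd(t, (q-1)/2) = 1, θ ∈ F_q^* a nonzero square, and α, β ∈ F_q^* both squares or both nonsquares. Let m ∈ {0,1} with m = 0 if α is a square and m = 1 otherwise. Define f : F_q → F_q by f(0) = 0, f(x) = α·x^t for x ∈ C_0, f(x) = β(x^3 + θx^2 + θ^2 x) for x ∈ C_1 (so f is a bijection). Let s be a positive integer with s·t ≡ 1 (mod (q-1)/2), let u(x) = (α^{-1}x)^s and v(x) = Σ_{j=0}^{n-1} Σ_{k=0}^{n-1} θ·(β^{-1}θ^{-3}x)^((3^j+3^k)/2), and let g(x) = -u(x)(1 + (-1)^m x^((q-1)/2)) - v(x)(1 + (-1)^(m+1) x^((q-1)/2)). Then g(f(c)) = c for every c ∈ F_q. -/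
/-!
In characteristic 3 the nonsquare branch is `x ↦ β x (x - θ)²`, so by Euler's criterion
`f(c)^((q-1)/2) = ±(-1)^m` tells whether `c` was a square, and the factors `1 ± (-1)^m x^((q-1)/2)`
are `2 = -1` or `0`: `g` evaluates `u` on images of squares and `v` on images of nonsquares.
For a square `c`, `u (α c^t) = c^(st) = c`. For a nonsquare `c`, put `w = c/θ` and
`y = w (w - 1)²`; since `(3^j + 3^k)/2 = (3^j - 1)/2 + (3^k - 1)/2 + 1`, `v (f c) = θ y B²` with
`B = ∑ y^((3^j - 1)/2)`, and the Frobenius telescopes `(w - 1) B = w^((q-1)/2) - 1 = -2 = 1`,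
whence `v (f c) = θ w = c`.
-/

open Finset

theorem pow_eq_self_of_modEq_one {M : Type*} [Monoid M] {a : M} {e k : ℕ} (ha : a ^ e = 1)
    (hk : k ≡ 1 [MOD e]) : a ^ k = a := by
  rw [pow_eq_pow_mod k ha, hk, ← pow_eq_pow_mod 1 ha, pow_one]

namespace FiniteField

variable {F : Type*} [Field F] [Fintype F] (hF : ringChar F ≠ 2) {a : F}
include hF

theorem pow_card_div_two_of_isSquare (ha : a ≠ 0) (h : IsSquare a) :
    a ^ (Fintype.card F / 2) = 1 :=
  (isSquare_iff hF ha).mp h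

theorem pow_card_div_two_of_not_isSquare (ha : a ≠ 0) (h : ¬IsSquare a) :
    a ^ (Fintype.card F / 2) = -1 :=
  (pow_dichotomy hF ha).resolve_left (mt (isSquare_iff hF ha).mpr h)

theorem pow_card_div_two_eq_neg_one_pow (ha : a ≠ 0) {m : ℕ}
    (hm : (IsSquare a ∧ m = 0) ∨ (¬IsSquare a ∧ m = 1)) :
    a ^ (Fintype.card F / 2) = (-1) ^ m := by
  rcases hm with ⟨h, rfl⟩ | ⟨h, rfl⟩
  · rw [pow_card_div_two_of_isSquare hF ha h, pow_zero]
  · rw [pow_card_div_two_of_not_isSquare hF ha h, pow_one]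

end FiniteField

section CharThree

variable {R : Type*} [CommRing R] [CharP R 3]

theorem neg_mul_sub_mul_eq_left (a b : R) {x : R} {m e : ℕ} (hx : x ^ e = (-1) ^ m) :
    -a * (1 + (-1) ^ m * x ^ e) - b * (1 + (-1) ^ (m + 1) * x ^ e) = a := by
  have hsq := pow_mul_pow_eq_one m (by norm_num : (-1 : R) * -1 = 1)
  rw [hx, pow_succ]
  linear_combination (b - a) * hsq - a * CharP.ofNat_eq_zero R 3

theorem neg_mul_sub_mul_eq_right (a b : R) {x : R} {m e : ℕ} (hx : x ^ e = (-1) ^ (m + 1)) :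
    -a * (1 + (-1) ^ m * x ^ e) - b * (1 + (-1) ^ (m + 1) * x ^ e) = b := by
  have hsq := pow_mul_pow_eq_one m (by norm_num : (-1 : R) * -1 = 1)
  rw [hx, pow_succ]
  linear_combination (a - b) * hsq - b * CharP.ofNat_eq_zero R 3

theorem sub_one_mul_sum_pow_three_pow_div_two (w : R) (i : ℕ) :
    (w - 1) * ∑ j ∈ range i, (w * (w - 1) ^ 2) ^ ((3 ^ j - 1) / 2) =
      w ^ ((3 ^ i - 1) / 2) - 1 := by
  induction i with
  | zero => simp
  | succ i ih =>
    obtain ⟨E, hE⟩ : Odd (3 ^ i) := Odd.pow (by decide)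
    have h_half : (3 ^ i - 1) / 2 = E := by omega
    have h_half_succ : (3 ^ (i + 1) - 1) / 2 = 3 * E + 1 := by rw [pow_succ]; omega
    have hfrob : (w - 1) ^ (2 * E + 1) = w ^ (2 * E + 1) - 1 := by
      rw [← hE, sub_pow_char_pow, one_pow]
    rw [sum_range_succ, mul_add, ih, h_half, h_half_succ, mul_pow, ← pow_mul]
    linear_combination w ^ E * hfrob

theorem sum_sum_pow_three_pow_add_div_two_eq_self {w : R} {n : ℕ}
    (hw : w ^ ((3 ^ n - 1) / 2) = -1) :
    ∑ j ∈ range n, ∑ k ∈ range n, (w * (w - 1) ^ 2) ^ ((3 ^ j + 3 ^ k) / 2) = w := by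
  set y := w * (w - 1) ^ 2
  set B := ∑ j ∈ range n, y ^ ((3 ^ j - 1) / 2)
  have hB : (w - 1) * B = 1 := by
    rw [sub_one_mul_sum_pow_three_pow_div_two, hw]
    linear_combination -CharP.ofNat_eq_zero R 3
  have hexp (j k : ℕ) : (3 ^ j + 3 ^ k) / 2 = (3 ^ j - 1) / 2 + (3 ^ k - 1) / 2 + 1 := by
    obtain ⟨a, ha⟩ : Odd (3 ^ j) := Odd.pow (by decide)
    obtain ⟨b, hb⟩ : Odd (3 ^ k) := Odd.pow (by decide)
    omega
  calc ∑ j ∈ range n, ∑ k ∈ range n, y ^ ((3 ^ j + 3 ^ k) / 2)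
      = y * (B * B) := by
        rw [sum_mul_sum, mul_sum]
        refine sum_congr rfl fun j _ ↦ ?_
        rw [mul_sum]
        refine sum_congr rfl fun k _ ↦ ?_
        rw [hexp, pow_add, pow_add, pow_one]
        ring
    _ = w * ((w - 1) * B) ^ 2 := by ring
    _ = w := by rw [hB, one_pow, mul_one]

end CharThree

section CharThreeField

variable {K : Type*} [Field K] [CharP K 3]

theorem sum_sum_cubic_pow_three_pow_add_div_two {β θ c : K} (hβ : β ≠ 0) (hθ : θ ≠ 0) {n : ℕ}
    (hc : (θ⁻¹ * c) ^ ((3 ^ n - 1) / 2) = -1) :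
    ∑ j ∈ range n, ∑ k ∈ range n,
      θ * (β⁻¹ * θ⁻¹ ^ 3 * (β * (c ^ 3 + θ * c ^ 2 + θ ^ 2 * c))) ^ ((3 ^ j + 3 ^ k) / 2) = c := by
  have hcubic : β⁻¹ * θ⁻¹ ^ 3 * (β * (c ^ 3 + θ * c ^ 2 + θ ^ 2 * c)) =
      θ⁻¹ * c * (θ⁻¹ * c - 1) ^ 2 := by
    field_simp
    linear_combination θ * c ^ 2 * CharP.ofNat_eq_zero K 3
  simp_rw [hcubic, ← mul_sum, sum_sum_pow_three_pow_add_div_two_eq_self hc]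
  field_simp

theorem mul_cubic_pow_card_div_two [Fintype K] (β : K) {θ c : K} (hθ : IsSquare θ) (hc : c ≠ 0)
    (hcs : ¬IsSquare c) :
    (β * (c ^ 3 + θ * c ^ 2 + θ ^ 2 * c)) ^ (Fintype.card K / 2) =
      -β ^ (Fintype.card K / 2) := by
  have hF : ringChar K ≠ 2 := by rw [ringChar.eq K 3]; decide
  have hcθ : c - θ ≠ 0 := sub_ne_zero.mpr fun h ↦ hcs (h ▸ hθ)
  have hcubic : c ^ 3 + θ * c ^ 2 + θ ^ 2 * c = c * (c - θ) ^ 2 := by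
    linear_combination θ * c ^ 2 * CharP.ofNat_eq_zero K 3
  rw [hcubic, mul_pow, mul_pow,
    FiniteField.pow_card_div_two_of_not_isSquare hF hc hcs,
    FiniteField.pow_card_div_two_of_isSquare hF (pow_ne_zero 2 hcθ) (IsSquare.sq _)]
  ring

end CharThreeField

theorem stmt_18_general {F : Type*} [Field F] [Fintype F] (n : ℕ)
    (hcard : Fintype.card F = 3 ^ n)
    (t : ℕ)
    (α β θ : F) (hα : α ≠ 0) (hβ : β ≠ 0) (hθ0 : θ ≠ 0)
    (hθ : IsSquare θ) (hαβ : IsSquare α ↔ IsSquare β)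
    (m : ℕ) (hm : (IsSquare α ∧ m = 0) ∨ (¬ IsSquare α ∧ m = 1))
    (s : ℕ) (hs : 0 < s) (hst : s * t ≡ 1 [MOD (3 ^ n - 1) / 2])
    (f u v g : F → F)
    (hf0 : f 0 = 0)
    (hfs : ∀ x : F, x ≠ 0 → IsSquare x → f x = α * x ^ t)
    (hfn : ∀ x : F, x ≠ 0 → ¬ IsSquare x → f x = β * (x ^ 3 + θ * x ^ 2 + θ ^ 2 * x))
    (hu : ∀ x, u x = (α⁻¹ * x) ^ s)
    (hv : ∀ x, v x = ∑ j ∈ Finset.range n, ∑ k ∈ Finset.range n,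
        θ * (β⁻¹ * θ⁻¹ ^ 3 * x) ^ ((3 ^ j + 3 ^ k) / 2))
    (hg : ∀ x, g x = -(u x) * (1 + (-1 : F) ^ m * x ^ ((3 ^ n - 1) / 2)) -
        v x * (1 + (-1 : F) ^ (m + 1) * x ^ ((3 ^ n - 1) / 2))) :
    ∀ c : F, g (f c) = c := by
  have : CharP F 3 := charP_of_card_eq_prime_pow hcard
  have hF : ringChar F ≠ 2 := by rw [ringChar.eq F 3]; decide
  have he : (3 ^ n - 1) / 2 = Fintype.card F / 2 := by
    obtain ⟨K, hK⟩ : Odd (3 ^ n) := Odd.pow (by decide)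
    omega
  rw [he] at hg hst
  have hαm := FiniteField.pow_card_div_two_eq_neg_one_pow hF hα hm
  have hβm := FiniteField.pow_card_div_two_eq_neg_one_pow hF hβ
    (hm.imp (And.imp_left hαβ.mp) (And.imp_left (mt hαβ.mpr)))
  intro c
  rcases eq_or_ne c 0 with rfl | hc0
  · have hexp_ne_zero (j k : ℕ) : (3 ^ j + 3 ^ k) / 2 ≠ 0 := by
      have := Nat.one_le_pow j 3 (by decide)
      have := Nat.one_le_pow k 3 (by decide)
      omega
    rw [hf0, hg, hu, hv]
    simp [hs.ne', hexp_ne_zero]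
  by_cases hcs : IsSquare c
  · have hc := FiniteField.pow_card_div_two_of_isSquare hF hc0 hcs
    have hx : (α * c ^ t) ^ (Fintype.card F / 2) = (-1) ^ m := by
      rw [mul_pow, ← pow_mul, mul_comm t, pow_mul, hc, one_pow, mul_one, hαm]
    rw [hfs c hc0 hcs, hg, neg_mul_sub_mul_eq_left _ _ hx, hu, inv_mul_cancel_left₀ hα, ← pow_mul,
      mul_comm]
    exact pow_eq_self_of_modEq_one hc hst
  · have hx := mul_cubic_pow_card_div_two β hθ hc0 hcs
    rw [hβm, ← mul_neg_one, ← pow_succ] at hx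
    rw [hfn c hc0 hcs, hg, neg_mul_sub_mul_eq_right _ _ hx, hv]
    refine sum_sum_cubic_pow_three_pow_add_div_two hβ hθ0 ?_
    rw [he, mul_pow, inv_pow, FiniteField.pow_card_div_two_of_isSquare hF hθ0 hθ,
      FiniteField.pow_card_div_two_of_not_isSquare hF hc0 hcs, inv_one, one_mul]

theorem stmt_18 {F : Type*} [Field F] [Fintype F] (n : ℕ) (hn : 1 ≤ n)
    (hcard : Fintype.card F = 3 ^ n)
    (t : ℕ) (ht : 0 < t) (hgcd : Nat.gcd t ((3 ^ n - 1) / 2) = 1)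
    (α β θ : F) (hα : α ≠ 0) (hβ : β ≠ 0) (hθ0 : θ ≠ 0)
    (hθ : IsSquare θ) (hαβ : IsSquare α ↔ IsSquare β)
    (m : ℕ) (hm : (IsSquare α ∧ m = 0) ∨ (¬ IsSquare α ∧ m = 1))
    (s : ℕ) (hs : 0 < s) (hst : s * t ≡ 1 [MOD (3 ^ n - 1) / 2])
    (f u v g : F → F)
    (hf0 : f 0 = 0)
    (hfs : ∀ x : F, x ≠ 0 → IsSquare x → f x = α * x ^ t)
    (hfn : ∀ x : F, x ≠ 0 → ¬ IsSquare x → f x = β * (x ^ 3 + θ * x ^ 2 + θ ^ 2 * x))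
    (hu : ∀ x, u x = (α⁻¹ * x) ^ s)
    (hv : ∀ x, v x = ∑ j ∈ Finset.range n, ∑ k ∈ Finset.range n,
        θ * (β⁻¹ * θ⁻¹ ^ 3 * x) ^ ((3 ^ j + 3 ^ k) / 2))
    (hg : ∀ x, g x = -(u x) * (1 + (-1 : F) ^ m * x ^ ((3 ^ n - 1) / 2)) -
        v x * (1 + (-1 : F) ^ (m + 1) * x ^ ((3 ^ n - 1) / 2))) :
    ∀ c : F, g (f c) = c :=
  stmt_18_general n hcard t α β θ hα hβ hθ0 hθ hαβ m hm s hs hst f u v g hf0 hfs hfn hu hv hg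
end

section
/- Let n ≥ 1, q = 3^n, C_0 the nonzero squares of F_q, C_1 the nonsquares, t a positive integer, and α, β, γ ∈ F_q^*. Define f : F_q → F_q by f(0) = 0, f(x) = α(x^3 + γx^2 + γ^2 x) for x ∈ C_0, and f(x) = β·x^t for x ∈ C_1. Assume f is a bijection of F_q (equivalently gcd(t, (q-1)/2) = 1, γ is a nonsquare, and η(α) = η(β)·(-1)^(t+1)), and let m ∈ {0,1} with m = 0 if α is a square and m = 1 otherwise. Let r, s be integers with 1 ≤ s < (q-1)/2 and s·t + r·(q-1)/2 = 1, let u(x) = Σ_{j=0}^{n-1} Σ_{k=0}^{n-1} γ·(α^{-1}γ^{-3}x)^((3^j+3^k)/2) and v(x) = (-1)^r·(β^{-1}x)^s, and let g(x) = -u(x)(1 + (-1)^m x^((q-1)/2)) - v(x)(1 + (-1)^(m+1) x^((q-1)/2)). Then g(f(c)) = c for every c ∈ F_q. -/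
/-!
In characteristic 3 we have `x ^ 3 + γ x ^ 2 + γ ^ 2 x = x (x - γ) ^ 2`, and `γ` must be a nonsquare
(otherwise `f γ = 0 = f 0`). Hence `f` sends the nonzero squares into the square class of `α`, and
since `f` is onto, it sends the nonsquares into the other class. So `y ^ ((q - 1) / 2)` detects
which branch the preimage of `y` lies in, and `g` picks `u` or `v` accordingly (using `-2 = 1`).

On nonsquares `v` inverts `x ↦ β x ^ t` because `s t ≡ 1 mod (q - 1) / 2` and
`c ^ ((q - 1) / 2) = -1`. On a square `c = d ^ 2`, put `w = γ⁻¹ d ^ 3 - d`; then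
`α⁻¹ γ⁻³ f c = γ⁻¹ w ^ 2`, the `(j, k)` summand of `u` factors as `b j * b k` with
`b j = w ^ 3 ^ j γ⁻¹ ^ ((3 ^ j - 1) / 2)`, and by the Frobenius `∑ b j` telescopes to
`d γ⁻¹ ^ ((q - 1) / 2) - d = -2 d = d`, so `u (f c) = d ^ 2 = c`.
-/

open Finset Function

theorem three_pow_div_two (n : ℕ) : 3 ^ n / 2 = (3 ^ n - 1) / 2 := by
  obtain ⟨k, hk⟩ : Odd (3 ^ n) := Odd.pow (by decide)
  omega

theorem neg_one_zpow_mul_pow_pow_eq_self {K : Type*} [Field K] {x : K} (hx : x ≠ 0)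
    {e s t : ℕ} {r : ℤ} (hxe : x ^ e = -1) (hsr : (s : ℤ) * t + r * e = 1) :
    (-1 : K) ^ r * (x ^ t) ^ s = x := by
  have hts : ((t * s : ℕ) : ℤ) = 1 - e * r := by push_cast; linear_combination hsr
  rw [← pow_mul, ← zpow_natCast, hts, zpow_sub₀ hx, zpow_one, zpow_mul, zpow_natCast, hxe]
  field_simp

theorem mul_inv_mul_sq_pow_half_add {K : Type*} [Field K] {γ : K} (hγ : γ ≠ 0) (w : K)
    {a b : ℕ} (ha : Odd a) (hb : Odd b) :
    γ * (γ⁻¹ * w ^ 2) ^ ((a + b) / 2) =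
      (w ^ a * γ⁻¹ ^ ((a - 1) / 2)) * (w ^ b * γ⁻¹ ^ ((b - 1) / 2)) := by
  obtain ⟨a, rfl⟩ := ha
  obtain ⟨b, rfl⟩ := hb
  have hab : (2 * a + 1 + (2 * b + 1)) / 2 = a + b + 1 := by omega
  simp only [hab, Nat.add_sub_cancel, Nat.mul_div_cancel_left _ two_pos]
  rw [mul_pow, ← pow_mul, pow_succ, pow_add]
  field_simp
  ring

section CharThree

variable {K : Type*} [Field K] [CharP K 3]

theorem pow_three_add_mul_sq_add_sq_mul (x γ : K) :
    x ^ 3 + γ * x ^ 2 + γ ^ 2 * x = x * (x - γ) ^ 2 := by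
  linear_combination γ * x ^ 2 * CharP.ofNat_eq_zero K 3

theorem sum_range_three_pow_telescope (γ d : K) (n : ℕ) :
    ∑ j ∈ range n, (γ⁻¹ * d ^ 3 - d) ^ 3 ^ j * γ⁻¹ ^ ((3 ^ j - 1) / 2) =
      d ^ 3 ^ n * γ⁻¹ ^ ((3 ^ n - 1) / 2) - d := by
  have hstep : ∀ j, (γ⁻¹ * d ^ 3 - d) ^ 3 ^ j * γ⁻¹ ^ ((3 ^ j - 1) / 2) =
      d ^ 3 ^ (j + 1) * γ⁻¹ ^ ((3 ^ (j + 1) - 1) / 2) - d ^ 3 ^ j * γ⁻¹ ^ ((3 ^ j - 1) / 2) := by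
    intro j
    obtain ⟨k, hk⟩ : Odd (3 ^ j) := Odd.pow (by decide)
    have hexp : (3 ^ (j + 1) - 1) / 2 = 3 ^ j + (3 ^ j - 1) / 2 := by rw [pow_succ]; omega
    rw [sub_pow_char_pow, mul_pow, ← pow_mul, ← pow_succ', hexp, pow_add]
    ring
  rw [sum_congr rfl fun j _ => hstep j,
    sum_range_sub (fun j => d ^ 3 ^ j * γ⁻¹ ^ ((3 ^ j - 1) / 2))]
  simp

end CharThree

namespace FiniteField

variable {F : Type*} [Field F] [Fintype F]

theorem pow_card_div_two_eq_neg_one_of_not_isSquare (hF : ringChar F ≠ 2) {x : F}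
    (hx : ¬IsSquare x) : x ^ (Fintype.card F / 2) = -1 :=
  have hx0 : x ≠ 0 := by rintro rfl; exact hx IsSquare.zero
  (pow_dichotomy hF hx0).resolve_left (mt (isSquare_iff hF hx0).mpr hx)

theorem pow_card_div_two_mul_mul_sub_sq (hF : ringChar F ≠ 2) (a : F) {γ x : F}
    (hγ : ¬IsSquare γ) (hx0 : x ≠ 0) (hx : IsSquare x) :
    (a * (x * (x - γ) ^ 2)) ^ (Fintype.card F / 2) = a ^ (Fintype.card F / 2) := by
  have hxγ : x - γ ≠ 0 := sub_ne_zero.mpr fun h => hγ (h ▸ hx)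
  rw [mul_pow, mul_pow, (isSquare_iff hF hx0).mp hx,
    (isSquare_iff hF (pow_ne_zero 2 hxγ)).mp (IsSquare.sq _), mul_one, mul_one]

theorem pow_card_div_two_eq_neg_of_surjective (hF : ringChar F ≠ 2) {f : F → F}
    (hf : Surjective f) (hf0 : f 0 = 0) {a δ : F} (ha : a ≠ 0)
    (hsq : ∀ x ≠ 0, IsSquare x → f x ^ (Fintype.card F / 2) = a ^ (Fintype.card F / 2))
    (hnsq : ∀ x, ¬IsSquare x → f x ^ (Fintype.card F / 2) = δ) :
    δ = -a ^ (Fintype.card F / 2) := by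
  -- `f` hits `a * b`, which lies in the class opposite to that of `a`, at a nonsquare.
  obtain ⟨b, hb⟩ := exists_nonsquare hF
  have hb0 : b ≠ 0 := by rintro rfl; exact hb IsSquare.zero
  have hab : (a * b) ^ (Fintype.card F / 2) = -a ^ (Fintype.card F / 2) := by
    rw [mul_pow, pow_card_div_two_eq_neg_one_of_not_isSquare hF hb, mul_neg_one]
  obtain ⟨x, hx⟩ := hf (a * b)
  have hx0 : x ≠ 0 := by
    rintro rfl
    exact mul_ne_zero ha hb0 (hx.symm.trans hf0)
  by_cases hxs : IsSquare x
  · have hxa := hsq x hx0 hxs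
    rw [hx, hab] at hxa
    have h2 : (2 : F) * a ^ (Fintype.card F / 2) = 0 := by linear_combination -hxa
    exact absurd h2 (mul_ne_zero (Ring.two_ne_zero hF) (pow_ne_zero _ ha))
  · rw [← hnsq x hxs, hx, hab]

theorem pow_card_div_two_apply_of_not_isSquare (hF : ringChar F ≠ 2) {f : F → F}
    (hf : Surjective f) (hf0 : f 0 = 0) {α β γ : F} {t : ℕ} (hα : α ≠ 0) (hγ : ¬IsSquare γ)
    (hfs : ∀ x ≠ 0, IsSquare x → f x = α * (x * (x - γ) ^ 2))
    (hfn : ∀ x ≠ 0, ¬IsSquare x → f x = β * x ^ t) {x : F} (hx : ¬IsSquare x) :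
    f x ^ (Fintype.card F / 2) = -α ^ (Fintype.card F / 2) := by
  have hsq : ∀ y ≠ 0, IsSquare y → f y ^ (Fintype.card F / 2) = α ^ (Fintype.card F / 2) :=
    fun y hy hys => by rw [hfs y hy hys, pow_card_div_two_mul_mul_sub_sq hF α hγ hy hys]
  have hnsq : ∀ y, ¬IsSquare y →
      f y ^ (Fintype.card F / 2) = β ^ (Fintype.card F / 2) * (-1) ^ t := fun y hy => by
    rw [hfn y (by rintro rfl; exact hy IsSquare.zero) hy, mul_pow, pow_right_comm,
        pow_card_div_two_eq_neg_one_of_not_isSquare hF hy]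
  rw [hnsq x hx, pow_card_div_two_eq_neg_of_surjective hF hf hf0 hα hsq hnsq]

theorem sum_sum_pow_mul_sub_sq_eq_self {n : ℕ} (hcard : Fintype.card F = 3 ^ n) {γ : F}
    (hγ : ¬IsSquare γ) {x : F} (hx : IsSquare x) :
    ∑ j ∈ range n, ∑ k ∈ range n,
      γ * (γ⁻¹ ^ 3 * (x * (x - γ) ^ 2)) ^ ((3 ^ j + 3 ^ k) / 2) = x := by
  have : CharP F 3 := charP_of_card_eq_prime_pow hcard
  have hF : ringChar F ≠ 2 := by rw [ringChar.eq F 3]; norm_num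
  have hγ0 : γ ≠ 0 := by rintro rfl; exact hγ IsSquare.zero
  obtain ⟨d, rfl⟩ := hx
  have hw : γ⁻¹ ^ 3 * (d * d * (d * d - γ) ^ 2) = γ⁻¹ * (γ⁻¹ * d ^ 3 - d) ^ 2 := by
    field_simp
  have hγe : γ⁻¹ ^ ((3 ^ n - 1) / 2) = -1 := by
    rw [inv_pow, ← three_pow_div_two, ← hcard,
      pow_card_div_two_eq_neg_one_of_not_isSquare hF hγ, inv_neg, inv_one]
  have hsum : ∑ j ∈ range n, (γ⁻¹ * d ^ 3 - d) ^ 3 ^ j * γ⁻¹ ^ ((3 ^ j - 1) / 2) = d := by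
    rw [sum_range_three_pow_telescope, ← hcard, pow_card, hcard, hγe]
    linear_combination -d * CharP.ofNat_eq_zero F 3
  have hodd : ∀ j, Odd (3 ^ j) := fun j => Odd.pow (by decide)
  simp_rw [hw, mul_inv_mul_sq_pow_half_add hγ0 _ (hodd _) (hodd _), ← sum_mul_sum, hsum]

end FiniteField

open FiniteField in
theorem stmt_19_general {F : Type*} [Field F] [Fintype F] (n : ℕ)
    (hcard : Fintype.card F = 3 ^ n)
    (t : ℕ)
    (α β γ : F) (hα : α ≠ 0) (hβ : β ≠ 0) (hγ : γ ≠ 0)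
    (f u v g : F → F)
    (hf0 : f 0 = 0)
    (hfs : ∀ x : F, x ≠ 0 → IsSquare x → f x = α * (x ^ 3 + γ * x ^ 2 + γ ^ 2 * x))
    (hfn : ∀ x : F, x ≠ 0 → ¬ IsSquare x → f x = β * x ^ t)
    (hbij : Function.Bijective f)
    (m : ℕ) (hm : (IsSquare α ∧ m = 0) ∨ (¬ IsSquare α ∧ m = 1))
    (s : ℕ) (r : ℤ) (hs1 : 1 ≤ s)
    (hsr : (s : ℤ) * t + r * ((3 ^ n - 1) / 2 : ℕ) = 1)
    (hu : ∀ x, u x = ∑ j ∈ Finset.range n, ∑ k ∈ Finset.range n,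
        γ * (α⁻¹ * γ⁻¹ ^ 3 * x) ^ ((3 ^ j + 3 ^ k) / 2))
    (hv : ∀ x, v x = (-1 : F) ^ r * (β⁻¹ * x) ^ s)
    (hg : ∀ x, g x = -(u x) * (1 + (-1 : F) ^ m * x ^ ((3 ^ n - 1) / 2)) -
        v x * (1 + (-1 : F) ^ (m + 1) * x ^ ((3 ^ n - 1) / 2))) :
    ∀ c : F, g (f c) = c := by
  have : CharP F 3 := charP_of_card_eq_prime_pow hcard
  have h3 : (3 : F) = 0 := CharP.ofNat_eq_zero F 3
  have hF : ringChar F ≠ 2 := by rw [ringChar.eq F 3]; norm_num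
  rw [← three_pow_div_two, ← hcard] at hsr hg
  set e := Fintype.card F / 2
  have hfsq : ∀ x ≠ 0, IsSquare x → f x = α * (x * (x - γ) ^ 2) := fun x hx hxs => by
    rw [hfs x hx hxs, pow_three_add_mul_sq_add_sq_mul]
  have hγs : ¬IsSquare γ := fun h => hγ <| hbij.1 <| by simp [hfsq γ hγ h, hf0]
  have hαm : α ^ e = (-1) ^ m := by
    rcases hm with ⟨hαs, rfl⟩ | ⟨hαs, rfl⟩
    · simpa using (isSquare_iff hF hα).mp hαs
    · simpa using pow_card_div_two_eq_neg_one_of_not_isSquare hF hαs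
  have hm2 : (-1 : F) ^ m * (-1) ^ m = 1 := by rw [← mul_pow]; simp
  intro c
  rcases eq_or_ne c 0 with rfl | hc
  · have hpos : ∀ j k : ℕ, (3 ^ j + 3 ^ k) / 2 ≠ 0 := fun j k =>
      (Nat.div_pos (add_le_add (Nat.one_le_pow _ _ three_pos) (Nat.one_le_pow _ _ three_pos))
        two_pos).ne'
    simp [hg, hu, hv, hf0, hpos, Nat.one_le_iff_ne_zero.mp hs1]
  by_cases hcs : IsSquare c
  · have huc : u (f c) = c := by
      have hcancel : ∀ y, α⁻¹ * γ⁻¹ ^ 3 * (α * y) = γ⁻¹ ^ 3 * y := fun y => by field_simp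
      rw [hu, hfsq c hc hcs, hcancel]
      exact sum_sum_pow_mul_sub_sq_eq_self hcard hγs hcs
    have hfc : f c ^ e = (-1) ^ m := by
      rw [hfsq c hc hcs, pow_card_div_two_mul_mul_sub_sq hF α hγs hc hcs, hαm]
    rw [hg, hfc, huc, pow_succ]
    linear_combination (v (f c) - c) * hm2 - c * h3
  · have hvc : v (f c) = c := by
      rw [hv, hfn c hc hcs, inv_mul_cancel_left₀ hβ]
      exact neg_one_zpow_mul_pow_pow_eq_self hc
        (pow_card_div_two_eq_neg_one_of_not_isSquare hF hcs) hsr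
    rw [hg, pow_card_div_two_apply_of_not_isSquare hF hbij.2 hf0 hα hγs hfsq hfn hcs, hαm, hvc,
      pow_succ]
    linear_combination (u (f c) - c) * hm2 - c * h3

theorem stmt_19 {F : Type*} [Field F] [Fintype F] (n : ℕ) (hn : 1 ≤ n)
    (hcard : Fintype.card F = 3 ^ n)
    (t : ℕ) (ht : 0 < t)
    (α β γ : F) (hα : α ≠ 0) (hβ : β ≠ 0) (hγ : γ ≠ 0)
    (f u v g : F → F)
    (hf0 : f 0 = 0)
    (hfs : ∀ x : F, x ≠ 0 → IsSquare x → f x = α * (x ^ 3 + γ * x ^ 2 + γ ^ 2 * x))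
    (hfn : ∀ x : F, x ≠ 0 → ¬ IsSquare x → f x = β * x ^ t)
    (hbij : Function.Bijective f)
    (m : ℕ) (hm : (IsSquare α ∧ m = 0) ∨ (¬ IsSquare α ∧ m = 1))
    (s : ℕ) (r : ℤ) (hs1 : 1 ≤ s) (hs2 : s < (3 ^ n - 1) / 2)
    (hsr : (s : ℤ) * t + r * ((3 ^ n - 1) / 2 : ℕ) = 1)
    (hu : ∀ x, u x = ∑ j ∈ Finset.range n, ∑ k ∈ Finset.range n,
        γ * (α⁻¹ * γ⁻¹ ^ 3 * x) ^ ((3 ^ j + 3 ^ k) / 2))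
    (hv : ∀ x, v x = (-1 : F) ^ r * (β⁻¹ * x) ^ s)
    (hg : ∀ x, g x = -(u x) * (1 + (-1 : F) ^ m * x ^ ((3 ^ n - 1) / 2)) -
        v x * (1 + (-1 : F) ^ (m + 1) * x ^ ((3 ^ n - 1) / 2))) :
    ∀ c : F, g (f c) = c :=
  stmt_19_general n hcard t α β γ hα hβ hγ f u v g hf0 hfs hfn hbij m hm s r hs1 hsr hu hv hg
end
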